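/- arXiv:1904.02330 — 13 statements merged into one kernel-verified Lean document; each statement's English description precedes it below -/
import Mathlib

section
/- Fix an integer N ≥ 1 and λ ∈ ℝ. In ℝ[[X]] let S_{N,λ} = ∑_{n=0}^{∞} (∏_{i=0}^{n-1} (1 − (N+i)λ)) · (N!/(N+n)!) · X^n and let f = S_{N,λ}^{-1} (the generating function ∑_{n≥0} β_{N,n}(λ) X^n/n! of the hypergeometric degenerate Bernoulli numbers). Define P_n(X) = (N+n)!/N! and Q_n(X) = ((N+n)!/N!) · ∑_{j=0}^{n} (∏_{i=0}^{j-1} (1 − (N+i)λ)) · (N!/(N+j)!) · X^j. Then: (i) for all n ≥ 2, P_n(X) = (N+n + (1−(N+n−1)λ)X) P_{n-1}(X) − (N+n−1)(1−(N+n−1)λ) X P_{n-2}(X), and the same recurrence holds for Q_n; (ii) for all n ≥ 0, Q_n(X) · f ≡ P_n(X) (mod X^{n+1}). -/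
/-!
Write `c n = (N+n)!/N!`, so that `P n = c n` and `Q n = c n · T n` with `T n` the truncation of
`S = ∑ a j X^j` at degree `n`. Using `c (n+1) = (N+n+1) c n`, the three-term recurrence for
`c n · w n` reduces to the first-order relation
`c (n+2) (w (n+2) - w (n+1)) = (1 - (N+n+1)λ) c (n+1) X (w (n+1) - w n)`
between consecutive differences. It is trivial for `w = 1`, and for `w = T` it is the identity
`c (n+1) a (n+1) = (1 - (N+n)λ) c n a n`, i.e. `c j a j = ∏_{i<j} (1 - (N+i)λ)`.
The congruence holds since `Q n ≡ c n · S (mod X^{n+1})` and `c n · S · S⁻¹ = c n`.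
-/

open Finset PowerSeries

theorem PowerSeries.trunc_C_mul_trunc_mul_inv {k : Type*} [Field k] {φ : PowerSeries k}
    (hφ : constantCoeff φ ≠ 0) (c : k) (n : ℕ) :
    trunc n (C c * (trunc n φ : PowerSeries k) * φ⁻¹) = trunc n (C c) := by
  rw [mul_comm (C c), mul_assoc, trunc_trunc_mul, ← mul_assoc, mul_comm φ, mul_assoc,
    PowerSeries.mul_inv_cancel φ hφ, mul_one]

namespace HypergeometricBernoulli

noncomputable def factorialRatio (N n : ℕ) : ℝ :=
  ((N + n).factorial : ℝ) / (N.factorial : ℝ)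

noncomputable def hypergeomCoeff (N : ℕ) (l : ℝ) (j : ℕ) : ℝ :=
  (∏ i ∈ range j, (1 - ((N : ℝ) + i) * l)) * ((N.factorial : ℝ) / ((N + j).factorial : ℝ))

noncomputable def hypergeomSeries (N : ℕ) (l : ℝ) : PowerSeries ℝ :=
  mk (hypergeomCoeff N l)

noncomputable def hypergeomPartialSum (N : ℕ) (l : ℝ) (n : ℕ) : PowerSeries ℝ :=
  ∑ j ∈ range (n + 1), C (hypergeomCoeff N l j) * X ^ j

def SatisfiesConvergentRecurrence (N : ℕ) (l : ℝ) (u : ℕ → PowerSeries ℝ) : Prop :=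
  ∀ n : ℕ, u (n + 2) = (C ((N : ℝ) + n + 2) + C (1 - ((N : ℝ) + n + 1) * l) * X) * u (n + 1)
    - C (((N : ℝ) + n + 1) * (1 - ((N : ℝ) + n + 1) * l)) * X * u n

variable (N : ℕ) (l : ℝ)

lemma factorialRatio_succ (n : ℕ) :
    factorialRatio N (n + 1) = ((N : ℝ) + n + 1) * factorialRatio N n := by
  rw [factorialRatio, factorialRatio, ← add_assoc, Nat.factorial_succ]
  push_cast
  ring

lemma factorialRatio_mul_hypergeomCoeff (j : ℕ) :
    factorialRatio N j * hypergeomCoeff N l j = ∏ i ∈ range j, (1 - ((N : ℝ) + i) * l) := by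
  rw [factorialRatio, hypergeomCoeff, mul_left_comm, div_mul_div_comm, mul_comm (N.factorial : ℝ),
    div_self (by positivity), mul_one]

lemma factorialRatio_mul_hypergeomCoeff_succ (n : ℕ) :
    factorialRatio N (n + 1) * hypergeomCoeff N l (n + 1) =
      (1 - ((N : ℝ) + n) * l) * (factorialRatio N n * hypergeomCoeff N l n) := by
  rw [factorialRatio_mul_hypergeomCoeff, factorialRatio_mul_hypergeomCoeff, prod_range_succ,
    mul_comm]

lemma constantCoeff_hypergeomSeries : constantCoeff (hypergeomSeries N l) = 1 := by
  have : (N.factorial : ℝ) ≠ 0 := by positivity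
  simp [hypergeomSeries, ← coeff_zero_eq_constantCoeff_apply, hypergeomCoeff, this]

lemma coe_trunc_hypergeomSeries (n : ℕ) :
    (trunc (n + 1) (hypergeomSeries N l) : PowerSeries ℝ) = hypergeomPartialSum N l n := by
  ext j
  simp [coeff_trunc, hypergeomSeries, hypergeomPartialSum]

lemma hypergeomPartialSum_succ_sub (n : ℕ) :
    hypergeomPartialSum N l (n + 1) - hypergeomPartialSum N l n =
      C (hypergeomCoeff N l (n + 1)) * X ^ (n + 1) := by
  rw [hypergeomPartialSum, sum_range_succ, hypergeomPartialSum, add_sub_cancel_left]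

lemma satisfiesConvergentRecurrence_C_mul (w : ℕ → PowerSeries ℝ)
    (hw : ∀ n : ℕ, C (factorialRatio N (n + 2)) * (w (n + 2) - w (n + 1)) =
      C ((1 - ((N : ℝ) + n + 1) * l) * factorialRatio N (n + 1)) * X * (w (n + 1) - w n)) :
    SatisfiesConvergentRecurrence N l (fun n => C (factorialRatio N n) * w n) := by
  intro n
  have hwn := hw n
  simp only [factorialRatio_succ, map_mul, map_add, map_sub, map_one, map_natCast, map_ofNat]
    at hwn ⊢
  push_cast at hwn ⊢
  linear_combination hwn

theorem satisfiesConvergentRecurrence_factorialRatio :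
    SatisfiesConvergentRecurrence N l (fun n => C (factorialRatio N n)) := by
  simpa using satisfiesConvergentRecurrence_C_mul N l (fun _ => 1) (by simp)

theorem satisfiesConvergentRecurrence_hypergeomPartialSum :
    SatisfiesConvergentRecurrence N l
      (fun n => C (factorialRatio N n) * hypergeomPartialSum N l n) := by
  refine satisfiesConvergentRecurrence_C_mul N l _ fun n => ?_
  have h : C (factorialRatio N (n + 2) * hypergeomCoeff N l (n + 1 + 1)) =
      C ((1 - ((N : ℝ) + n + 1) * l) *
        (factorialRatio N (n + 1) * hypergeomCoeff N l (n + 1))) := by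
    congr 1
    rw [factorialRatio_mul_hypergeomCoeff_succ N l (n + 1)]
    push_cast
    ring
  rw [hypergeomPartialSum_succ_sub, hypergeomPartialSum_succ_sub]
  simp only [map_mul] at h ⊢
  linear_combination X ^ (n + 2) * h

theorem coeff_C_mul_hypergeomPartialSum_mul_inv {n k : ℕ} (hk : k ≤ n) :
    coeff k (C (factorialRatio N n) * hypergeomPartialSum N l n * (hypergeomSeries N l)⁻¹) =
      coeff k (C (factorialRatio N n)) := by
  have h := congrArg (Polynomial.coeff · k) <| PowerSeries.trunc_C_mul_trunc_mul_inv
    (φ := hypergeomSeries N l) (by simp [constantCoeff_hypergeomSeries])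
    (factorialRatio N n) (n + 1)
  simpa only [coeff_trunc, if_pos (Nat.lt_succ_of_le hk), coe_trunc_hypergeomSeries] using h

end HypergeometricBernoulli

open HypergeometricBernoulli in
theorem statement2_general (N : ℕ) (l : ℝ)
    (S f : PowerSeries ℝ)
    (hS : S = PowerSeries.mk fun n =>
      (∏ i ∈ Finset.range n, (1 - ((N : ℝ) + i) * l)) *
        ((N.factorial : ℝ) / ((N + n).factorial : ℝ)))
    (hf : f = S⁻¹)
    (P Q : ℕ → PowerSeries ℝ)
    (hP : ∀ n, P n = PowerSeries.C (((N + n).factorial : ℝ) / (N.factorial : ℝ)))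
    (hQ : ∀ n, Q n = PowerSeries.C (((N + n).factorial : ℝ) / (N.factorial : ℝ)) *
      ∑ j ∈ Finset.range (n + 1),
        PowerSeries.C ((∏ i ∈ Finset.range j, (1 - ((N : ℝ) + i) * l)) *
          ((N.factorial : ℝ) / ((N + j).factorial : ℝ))) * PowerSeries.X ^ j) :
    (∀ n : ℕ,
      P (n + 2) = (PowerSeries.C ((N : ℝ) + n + 2) +
            PowerSeries.C (1 - ((N : ℝ) + n + 1) * l) * PowerSeries.X) * P (n + 1)
          - PowerSeries.C (((N : ℝ) + n + 1) * (1 - ((N : ℝ) + n + 1) * l)) *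
              PowerSeries.X * P n ∧
      Q (n + 2) = (PowerSeries.C ((N : ℝ) + n + 2) +
            PowerSeries.C (1 - ((N : ℝ) + n + 1) * l) * PowerSeries.X) * Q (n + 1)
          - PowerSeries.C (((N : ℝ) + n + 1) * (1 - ((N : ℝ) + n + 1) * l)) *
              PowerSeries.X * Q n) ∧
    (∀ n : ℕ, ∀ k ≤ n,
      PowerSeries.coeff k (Q n * f) = PowerSeries.coeff k (P n)) := by
  have hP' : P = fun n => C (factorialRatio N n) := funext hP
  have hQ' : Q = fun n => C (factorialRatio N n) * hypergeomPartialSum N l n := funext hQ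
  have hf' : f = (hypergeomSeries N l)⁻¹ := by rw [hf, hS]; rfl
  subst hP' hQ' hf'
  exact ⟨fun n => ⟨satisfiesConvergentRecurrence_factorialRatio N l n,
      satisfiesConvergentRecurrence_hypergeomPartialSum N l n⟩,
    fun n k hk => coeff_C_mul_hypergeomPartialSum_mul_inv N l hk⟩

/-- Continued fraction convergents for the generating function of the
hypergeometric degenerate Bernoulli numbers `β_{N,n}(λ)`.  With
`S = ∑_n (∏_{i=0}^{n-1}(1-(N+i)λ)) · (N!/(N+n)!) · X^n`, `f = S⁻¹`,
`P n = (N+n)!/N!` and `Q n = ((N+n)!/N!) · ∑_{j=0}^n (∏_{i<j}(1-(N+i)λ)) (N!/(N+j)!) X^j`: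
(i) for all `n ≥ 2` (here written at index `n+2`) both `P` and `Q` satisfy the recurrence
`P_n = (N+n + (1-(N+n-1)λ)X) P_{n-1} - (N+n-1)(1-(N+n-1)λ) X P_{n-2}`;
(ii) for all `n ≥ 0`, `Q n · f ≡ P n (mod X^{n+1})`. -/
theorem statement2 (N : ℕ) (hN : 1 ≤ N) (l : ℝ)
    (S f : PowerSeries ℝ)
    (hS : S = PowerSeries.mk fun n =>
      (∏ i ∈ Finset.range n, (1 - ((N : ℝ) + i) * l)) *
        ((N.factorial : ℝ) / ((N + n).factorial : ℝ)))
    (hf : f = S⁻¹)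
    (P Q : ℕ → PowerSeries ℝ)
    (hP : ∀ n, P n = PowerSeries.C (((N + n).factorial : ℝ) / (N.factorial : ℝ)))
    (hQ : ∀ n, Q n = PowerSeries.C (((N + n).factorial : ℝ) / (N.factorial : ℝ)) *
      ∑ j ∈ Finset.range (n + 1),
        PowerSeries.C ((∏ i ∈ Finset.range j, (1 - ((N : ℝ) + i) * l)) *
          ((N.factorial : ℝ) / ((N + j).factorial : ℝ))) * PowerSeries.X ^ j) :
    (∀ n : ℕ,
      P (n + 2) = (PowerSeries.C ((N : ℝ) + n + 2) +
            PowerSeries.C (1 - ((N : ℝ) + n + 1) * l) * PowerSeries.X) * P (n + 1)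
          - PowerSeries.C (((N : ℝ) + n + 1) * (1 - ((N : ℝ) + n + 1) * l)) *
              PowerSeries.X * P n ∧
      Q (n + 2) = (PowerSeries.C ((N : ℝ) + n + 2) +
            PowerSeries.C (1 - ((N : ℝ) + n + 1) * l) * PowerSeries.X) * Q (n + 1)
          - PowerSeries.C (((N : ℝ) + n + 1) * (1 - ((N : ℝ) + n + 1) * l)) *
              PowerSeries.X * Q n) ∧
    (∀ n : ℕ, ∀ k ≤ n,
      PowerSeries.coeff k (Q n * f) = PowerSeries.coeff k (P n)) :=
  statement2_general N l S f hS hf P Q hP hQ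
end

section
/- Fix an integer N ≥ 1. In ℝ[[X]] let f = (∑_{n=0}^{∞} (N!/(N+n)!) X^n)^{-1} (the generating function ∑_{n≥0} B_{N,n} X^n/n! of the hypergeometric Bernoulli numbers). Define P_n(X) = (N+n)!/N! and Q_n(X) = ((N+n)!/N!) · ∑_{j=0}^{n} (N!/(N+j)!) X^j. Then: (i) for all n ≥ 2, P_n(X) = (N+n+X) P_{n-1}(X) − (N+n−1) X P_{n-2}(X), and the same recurrence holds for Q_n; (ii) for all n ≥ 0, Q_n(X) · f ≡ P_n(X) (mod X^{n+1}). -/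
open Finset PowerSeries

/-!
Both parts reduce to two facts about `a n = (N+n)!/N!` and `c n = N!/(N+n)!`:
`a (n+1) = (N+n+1) a n` and `a n c n = 1`. The first gives the recurrence for `P n = a n`;
for `Q n = a n ∑_{j ≤ n} c j X^j` the two previous sums differ by `c (n+1) X^(n+1)`, which turns
the recurrence into the identity `a (n+2) c (n+2) X^(n+2) = X^(n+2)`. For (ii), the sum in `Q n`
is the truncation at degree `n` of `f⁻¹`, so `Q n f` agrees with `a n · f⁻¹ f = a n` up to
degree `n`.
-/

theorem PowerSeries.coe_trunc_eq_sum_range {R : Type*} [CommSemiring R] (n : ℕ) (f : R⟦X⟧) :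
    (trunc n f : R⟦X⟧) = ∑ m ∈ range n, C (coeff m f) * X ^ m := by
  rw [← Polynomial.eval₂_C_X_eq_coe, eval₂_trunc_eq_sum_range]

theorem PowerSeries.coeff_coe_trunc_mul_of_lt {R : Type*} [CommSemiring R] {k n : ℕ}
    (hk : k < n) (f g : R⟦X⟧) : coeff k ((trunc n f : R⟦X⟧) * g) = coeff k (f * g) := by
  rw [← coeff_coe_trunc_of_lt hk, trunc_trunc_mul, coeff_coe_trunc_of_lt hk]

theorem PowerSeries.coeff_coe_trunc_mul_inv_of_lt {K : Type*} [Field K] {k n : ℕ}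
    (hk : k < n) {g : K⟦X⟧} (hg : constantCoeff g ≠ 0) :
    coeff k ((trunc n g : K⟦X⟧) * g⁻¹) = coeff k (1 : K⟦X⟧) := by
  rw [coeff_coe_trunc_mul_of_lt hk, PowerSeries.mul_inv_cancel g hg]

section ThreeTermRecurrence

variable {A : Type*} [CommRing A] (x : A) {a c d : ℕ → A}

theorem three_term_recurrence_of_succ_eq_mul (ha : ∀ n, a (n + 1) = d n * a n) (n : ℕ) :
    a (n + 2) = (d (n + 1) + x) * a (n + 1) - d n * x * a n := by
  rw [ha (n + 1), ha n]
  ring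

theorem three_term_recurrence_mul_partial_sum (ha : ∀ n, a (n + 1) = d n * a n)
    (hac : ∀ n, a n * c n = 1) (n : ℕ) :
    a (n + 2) * ∑ j ∈ range (n + 3), c j * x ^ j =
      (d (n + 1) + x) * (a (n + 1) * ∑ j ∈ range (n + 2), c j * x ^ j)
        - d n * x * (a n * ∑ j ∈ range (n + 1), c j * x ^ j) := by
  have h2 := sum_range_succ (fun j => c j * x ^ j) (n + 2)
  have h1 := sum_range_succ (fun j => c j * x ^ j) (n + 1)
  linear_combination a (n + 2) * h2 - x * a (n + 1) * h1
    + (∑ j ∈ range (n + 2), c j * x ^ j) * ha (n + 1)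
    - x * (∑ j ∈ range (n + 1), c j * x ^ j) * ha n
    + x ^ (n + 2) * hac (n + 2) - x ^ (n + 2) * hac (n + 1)

end ThreeTermRecurrence

theorem Nat.cast_factorial_add_succ_div {K : Type*} [Field K] (N n : ℕ) :
    ((N + (n + 1)).factorial : K) / N.factorial =
      (N + n + 1) * ((N + n).factorial / N.factorial) := by
  rw [← add_assoc, Nat.factorial_succ]
  push_cast
  ring

theorem statement3_general (N : ℕ)
    (f : PowerSeries ℝ)
    (hf : f = (PowerSeries.mk fun n => ((N.factorial : ℝ) / ((N + n).factorial : ℝ)))⁻¹)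
    (P Q : ℕ → PowerSeries ℝ)
    (hP : ∀ n, P n = PowerSeries.C (((N + n).factorial : ℝ) / (N.factorial : ℝ)))
    (hQ : ∀ n, Q n = PowerSeries.C (((N + n).factorial : ℝ) / (N.factorial : ℝ)) *
      ∑ j ∈ Finset.range (n + 1),
        PowerSeries.C ((N.factorial : ℝ) / ((N + j).factorial : ℝ)) * PowerSeries.X ^ j) :
    (∀ n : ℕ,
      P (n + 2) = (PowerSeries.C ((N : ℝ) + n + 2) + PowerSeries.X) * P (n + 1)
          - PowerSeries.C ((N : ℝ) + n + 1) * PowerSeries.X * P n ∧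
      Q (n + 2) = (PowerSeries.C ((N : ℝ) + n + 2) + PowerSeries.X) * Q (n + 1)
          - PowerSeries.C ((N : ℝ) + n + 1) * PowerSeries.X * Q n) ∧
    (∀ n : ℕ, ∀ k ≤ n,
      PowerSeries.coeff k (Q n * f) = PowerSeries.coeff k (P n)) := by
  have ha : ∀ n, C (((N + (n + 1)).factorial : ℝ) / N.factorial) =
      C ((N : ℝ) + n + 1) * C (((N + n).factorial : ℝ) / N.factorial) := fun n => by
    rw [Nat.cast_factorial_add_succ_div, map_mul]
  have hac : ∀ n, C (((N + n).factorial : ℝ) / N.factorial) *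
      C ((N.factorial : ℝ) / (N + n).factorial) = 1 := fun n => by
    rw [← map_mul, div_mul_div_cancel₀ (by positivity), div_self (by positivity), map_one]
  have hd : ∀ n : ℕ, C ((N : ℝ) + ↑(n + 1) + 1) = C ((N : ℝ) + n + 2) := fun n => by
    push_cast
    ring_nf
  refine ⟨fun n => ⟨?_, ?_⟩, fun n k hk => ?_⟩
  · simpa only [hP, hd] using three_term_recurrence_of_succ_eq_mul X
      (a := fun n => C (((N + n).factorial : ℝ) / N.factorial))
      (d := fun n => C ((N : ℝ) + n + 1))
      ha n
  · simpa only [hQ, hd] using three_term_recurrence_mul_partial_sum X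
      (a := fun n => C (((N + n).factorial : ℝ) / N.factorial))
      (d := fun n => C ((N : ℝ) + n + 1))
      ha hac n
  · set g : ℝ⟦X⟧ := mk fun n => (N.factorial : ℝ) / (N + n).factorial
    have hg : constantCoeff g ≠ 0 := by simp [g, Nat.factorial_ne_zero]
    have hsum : ∑ j ∈ range (n + 1), C ((N.factorial : ℝ) / (N + j).factorial) * X ^ j =
        (trunc (n + 1) g : ℝ⟦X⟧) := by simp [g, coe_trunc_eq_sum_range]
    rw [hf, hQ, hP, mul_assoc, coeff_C_mul, hsum,
      coeff_coe_trunc_mul_inv_of_lt (Nat.lt_succ_of_le hk) hg, ← coeff_C_mul, mul_one]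

/-- Continued fraction convergents for the generating function of the
hypergeometric Bernoulli numbers `B_{N,n}`, i.e. `f = (∑_n (N!/(N+n)!) X^n)⁻¹`.
With `P n = (N+n)!/N!` and `Q n = ((N+n)!/N!) · ∑_{j=0}^n (N!/(N+j)!) X^j`:
(i) for all `n ≥ 2` (written at index `n+2`) both satisfy
`P_n = (N+n+X) P_{n-1} - (N+n-1) X P_{n-2}`;
(ii) for all `n ≥ 0`, `Q n · f ≡ P n (mod X^{n+1})`. -/
theorem statement3 (N : ℕ) (hN : 1 ≤ N)
    (f : PowerSeries ℝ)
    (hf : f = (PowerSeries.mk fun n => ((N.factorial : ℝ) / ((N + n).factorial : ℝ)))⁻¹)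
    (P Q : ℕ → PowerSeries ℝ)
    (hP : ∀ n, P n = PowerSeries.C (((N + n).factorial : ℝ) / (N.factorial : ℝ)))
    (hQ : ∀ n, Q n = PowerSeries.C (((N + n).factorial : ℝ) / (N.factorial : ℝ)) *
      ∑ j ∈ Finset.range (n + 1),
        PowerSeries.C ((N.factorial : ℝ) / ((N + j).factorial : ℝ)) * PowerSeries.X ^ j) :
    (∀ n : ℕ,
      P (n + 2) = (PowerSeries.C ((N : ℝ) + n + 2) + PowerSeries.X) * P (n + 1)
          - PowerSeries.C ((N : ℝ) + n + 1) * PowerSeries.X * P n ∧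
      Q (n + 2) = (PowerSeries.C ((N : ℝ) + n + 2) + PowerSeries.X) * Q (n + 1)
          - PowerSeries.C ((N : ℝ) + n + 1) * PowerSeries.X * Q n) ∧
    (∀ n : ℕ, ∀ k ≤ n,
      PowerSeries.coeff k (Q n * f) = PowerSeries.coeff k (P n)) :=
  statement3_general N f hf P Q hP hQ
end

section
/- Let B_k denote the Bernoulli numbers, defined by ∑_{k≥0} B_k X^k/k! = X/(e^X − 1) in ℚ[[X]]. Define P_n = (n+1)! and Q_n(X) = (n+1)! · ∑_{j=0}^{n} X^j/(j+1)!. Then: (i) for all n ≥ 2, Q_n(X) = (n+1+X) Q_{n-1}(X) − n X Q_{n-2}(X), with Q_0 = 1 and Q_1(X) = 2 + X; (ii) for all n ≥ 0, Q_n(X) · (∑_{k≥0} B_k X^k/k!) ≡ (n+1)! (mod X^{n+1}). -/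
open Finset PowerSeries
open scoped Nat

/-!
`Q n` is `(n+1)!` times the degree-`n` truncation `S n` of `(e^X - 1)/X`, the denominator of
the `n`-th convergent of the continued fraction. Adding one term to the truncation gives the
first-order recurrence `Q (n+1) = (n+2) Q n + X^(n+1)`, and eliminating `X^(n+1)` between two
consecutive instances gives the three-term recurrence. For the congruence,
`X · S n ≡ e^X - 1 (mod X^(n+2))`; multiplying by `F = ∑ B_k X^k/k!` and using
`F (e^X - 1) = X` gives `X · Q n · F ≡ (n+1)! X (mod X^(n+2))`, and `X` cancels.
-/

noncomputable def convergentDenom (n : ℕ) : ℚ⟦X⟧ :=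
  C ((n + 1)! : ℚ) * ∑ j ∈ range (n + 1), C (1 / ((j + 1)! : ℚ)) * X ^ j

theorem convergentDenom_zero : convergentDenom 0 = 1 := by
  simp [convergentDenom]

theorem convergentDenom_succ (n : ℕ) :
    convergentDenom (n + 1) = C ((n : ℚ) + 2) * convergentDenom n + X ^ (n + 1) := by
  have hfac : ((n + 2)! : ℚ) = ((n : ℚ) + 2) * (n + 1)! := by
    push_cast [Nat.factorial_succ]; ring
  have hinv : ((n + 2)! : ℚ) * (1 / (n + 2)!) = 1 := mul_one_div_cancel (by positivity)
  rw [convergentDenom, convergentDenom, sum_range_succ _ (n + 1), mul_add, ← mul_assoc, ← map_mul,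
    hinv, map_one, one_mul, hfac, map_mul, mul_assoc]

theorem convergentDenom_one : convergentDenom 1 = C 2 + X := by
  rw [convergentDenom_succ, convergentDenom_zero]; norm_num

theorem convergentDenom_add_two (n : ℕ) :
    convergentDenom (n + 2) = (C ((n : ℚ) + 3) + X) * convergentDenom (n + 1)
      - C ((n : ℚ) + 2) * X * convergentDenom n := by
  have h₁ := convergentDenom_succ n
  have h₂ := convergentDenom_succ (n + 1)
  push_cast at h₂
  rw [h₂, show (n : ℚ) + 1 + 2 = n + 3 by ring]
  linear_combination (-X) * h₁

theorem X_pow_dvd_exp_sub_one_sub (n : ℕ) :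
    X ^ (n + 2) ∣ exp ℚ - 1 - X * ∑ j ∈ range (n + 1), C (1 / ((j + 1)! : ℚ)) * X ^ j := by
  refine X_pow_dvd_iff.mpr fun m hm => ?_
  cases m with
  | zero => simp
  | succ m =>
    have hm : m ∈ range (n + 1) := mem_range.mpr (by omega)
    simp [coeff_exp, coeff_one, hm]

theorem X_pow_dvd_convergentDenom_mul_sub {F : ℚ⟦X⟧} (hF : F * (exp ℚ - 1) = X) (n : ℕ) :
    X ^ (n + 1) ∣ convergentDenom n * F - C ((n + 1)! : ℚ) := by
  obtain ⟨R, hR⟩ := X_pow_dvd_exp_sub_one_sub n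
  have hX : X * (convergentDenom n * F - C ((n + 1)! : ℚ)) =
      X * (X ^ (n + 1) * (-C ((n + 1)! : ℚ) * R * F)) := by
    rw [convergentDenom]
    linear_combination (-C ((n + 1)! : ℚ) * F) * hR + C ((n + 1)! : ℚ) * hF
  exact ⟨_, mul_left_cancel₀ X_ne_zero hX⟩

/-- Let `B_k` be the Bernoulli numbers, defined by
`(∑_k B_k X^k/k!) · (e^X - 1) = X` in `ℚ⟦X⟧`.  With `P n = (n+1)!` and
`Q n = (n+1)! · ∑_{j=0}^n X^j/(j+1)!`:
(i) for all `n ≥ 2` (written at index `n+2`), `Q_n = (n+1+X) Q_{n-1} - n X Q_{n-2}`,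
with `Q_0 = 1`, `Q_1 = 2 + X`;
(ii) for all `n ≥ 0`, `Q n · (∑_k B_k X^k/k!) ≡ (n+1)! (mod X^{n+1})`. -/
theorem statement4 (B : ℕ → ℚ)
    (hB : (PowerSeries.mk fun k => B k / (k.factorial : ℚ)) * (PowerSeries.exp ℚ - 1) =
      PowerSeries.X)
    (Q : ℕ → PowerSeries ℚ)
    (hQ : ∀ n, Q n = PowerSeries.C (R := ℚ) (((n + 1).factorial : ℚ)) *
      ∑ j ∈ Finset.range (n + 1),
        PowerSeries.C (R := ℚ) (1 / ((j + 1).factorial : ℚ)) * PowerSeries.X ^ j) :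
    (∀ n : ℕ,
      Q (n + 2) = (PowerSeries.C (R := ℚ) ((n : ℚ) + 3) + PowerSeries.X) * Q (n + 1)
          - PowerSeries.C (R := ℚ) ((n : ℚ) + 2) * PowerSeries.X * Q n) ∧
    Q 0 = 1 ∧ Q 1 = PowerSeries.C (R := ℚ) 2 + PowerSeries.X ∧
    (∀ n : ℕ, ∀ k ≤ n,
      PowerSeries.coeff (R := ℚ) k (Q n * PowerSeries.mk fun j => B j / (j.factorial : ℚ)) =
        PowerSeries.coeff (R := ℚ) k (PowerSeries.C (R := ℚ) (((n + 1).factorial : ℚ)))) := by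
  obtain rfl : Q = convergentDenom := funext hQ
  refine ⟨convergentDenom_add_two, convergentDenom_zero, convergentDenom_one, fun n k hk => ?_⟩
  rw [← sub_eq_zero, ← map_sub]
  exact X_pow_dvd_iff.mp (X_pow_dvd_convergentDenom_mul_sub hB n) k (by omega)
end

section
/- Fix an integer N ≥ 1. In ℚ[[X]] let f_N = (∑_{n=0}^{∞} (−1)^n (N/(N+n)) X^n)^{-1} (the generating function ∑_{n≥0} c_{N,n} X^n/n! of the hypergeometric Cauchy numbers). Define P_n(X) = (N+n)!/N! and Q_n(X) = ((N+n)!/N!) · ∑_{i=0}^{n} (−1)^i (N/(N+i)) X^i. Then: (i) for all n ≥ 2, P_n(X) = (N+n − (N+n−1)X) P_{n-1}(X) + (N+n−1)^2 X P_{n-2}(X), and the same recurrence holds for Q_n; (ii) for all n ≥ 0, Q_n(X) · f_N ≡ P_n(X) (mod X^{n+1}). -/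
/-!
With `c n = (N+n)!/N!` one has `c (n+1) = (N+n+1) c n`, `P n = c n · 1` and `Q n = c n · S n`,
where `S n` is the truncation below degree `n+1` of `g = ∑ aᵢ Xⁱ`, `aᵢ = (-1)ⁱ N/(N+i)`. Any
`c n · S n` obeys the three-term recurrence as soon as the increments of `S` satisfy
`(N+n+2)(S (n+2) - S (n+1)) = -(N+n+1) X (S (n+1) - S n)`; for `S = 1` this is trivial, and for
the truncations of `g` it is `(N+i) aᵢ = (-1)ⁱ N`. Part (ii) holds because `f = g⁻¹` and the
truncation of `g` agrees with `g` modulo `X^{n+1}`.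
-/

open Finset PowerSeries

namespace PowerSeries

section CommSemiring

variable {R : Type*} [CommSemiring R]

theorem sum_range_C_mul_X_pow_eq_trunc (a : ℕ → R) (n : ℕ) :
    ∑ i ∈ range n, C (a i) * X ^ i = (trunc n (mk a) : R⟦X⟧) := by
  simp only [← Polynomial.eval₂_C_X_eq_coe, eval₂_trunc_eq_sum_range, coeff_mk]

theorem coeff_coe_trunc_mul_of_lt_s7 {k n : ℕ} (φ ψ : R⟦X⟧) (h : k < n) :
    coeff k ((trunc n φ : R⟦X⟧) * ψ) = coeff k (φ * ψ) := by
  rw [coeff_mul_eq_coeff_trunc_mul_trunc _ _ h, trunc_trunc,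
    ← coeff_mul_eq_coeff_trunc_mul_trunc _ _ h]

end CommSemiring

theorem coeff_coe_trunc_mul_inv_of_lt_s7 {K : Type*} [Field K] {k n : ℕ} (φ : K⟦X⟧)
    (hφ : constantCoeff φ ≠ 0) (h : k < n) :
    coeff k ((trunc n φ : K⟦X⟧) * φ⁻¹) = coeff k (1 : K⟦X⟧) := by
  rw [coeff_coe_trunc_mul_of_lt_s7 _ _ h, PowerSeries.mul_inv_cancel _ hφ]

theorem C_mul_coe_trunc_sub_eq {R : Type*} [CommRing R] (a : ℕ → R) (n : ℕ) {r₁ r₂ : R}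
    (ha : r₂ * a (n + 2) = -(r₁ * a (n + 1))) :
    C r₂ * ((trunc (n + 2 + 1) (mk a) : R⟦X⟧) - (trunc (n + 1 + 1) (mk a) : R⟦X⟧))
      = -(C r₁ * X * ((trunc (n + 1 + 1) (mk a) : R⟦X⟧) - (trunc (n + 1) (mk a) : R⟦X⟧))) := by
  simp only [trunc_succ, Polynomial.coe_add, add_sub_cancel_left, Polynomial.coe_monomial,
    monomial_eq_C_mul_X_pow, coeff_mk]
  rw [← mul_assoc, ← map_mul, ha, map_neg, map_mul]
  ring

end PowerSeries

theorem mul_eq_three_term_recurrence {A : Type*} [CommRing A] {r₁ r₂ x c₀ c₁ c₂ S₀ S₁ S₂ : A}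
    (hc₁ : c₁ = r₁ * c₀) (hc₂ : c₂ = r₂ * c₁) (hS : r₂ * (S₂ - S₁) = -(r₁ * x * (S₁ - S₀))) :
    c₂ * S₂ = (r₂ - r₁ * x) * (c₁ * S₁) + r₁ ^ 2 * x * (c₀ * S₀) := by
  subst hc₁ hc₂
  linear_combination r₁ * c₀ * hS

theorem factorial_add_succ_div_factorial (N m : ℕ) :
    ((N + (m + 1)).factorial : ℚ) / N.factorial
      = ((N : ℚ) + m + 1) * (((N + m).factorial : ℚ) / N.factorial) := by
  rw [← add_assoc, Nat.factorial_succ]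
  push_cast
  ring

theorem C_factorial_div_factorial_mul_three_term_recurrence (N : ℕ) {S : ℕ → ℚ⟦X⟧} (n : ℕ)
    (hS : C ((N : ℚ) + n + 2) * (S (n + 2) - S (n + 1))
      = -(C ((N : ℚ) + n + 1) * X * (S (n + 1) - S n))) :
    C (((N + (n + 2)).factorial : ℚ) / N.factorial) * S (n + 2)
      = (C ((N : ℚ) + n + 2) - C ((N : ℚ) + n + 1) * X)
          * (C (((N + (n + 1)).factorial : ℚ) / N.factorial) * S (n + 1))
        + C (((N : ℚ) + n + 1) ^ 2) * X * (C (((N + n).factorial : ℚ) / N.factorial) * S n) := by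
  have hc₁ : C (((N + (n + 1)).factorial : ℚ) / N.factorial)
      = C ((N : ℚ) + n + 1) * C (((N + n).factorial : ℚ) / N.factorial) := by
    rw [← map_mul, factorial_add_succ_div_factorial]
  have hc₂ : C (((N + (n + 2)).factorial : ℚ) / N.factorial)
      = C ((N : ℚ) + n + 2) * C (((N + (n + 1)).factorial : ℚ) / N.factorial) := by
    rw [← map_mul, show N + (n + 2) = N + (n + 1 + 1) from rfl, factorial_add_succ_div_factorial]
    push_cast
    ring_nf
  rw [map_pow]
  exact mul_eq_three_term_recurrence hc₁ hc₂ hS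

theorem add_two_mul_neg_one_pow_div_add (N n : ℕ) :
    ((N : ℚ) + n + 2) * ((-1) ^ (n + 2) * ((N : ℚ) / ((N : ℚ) + (n + 2 : ℕ))))
      = -(((N : ℚ) + n + 1) * ((-1) ^ (n + 1) * ((N : ℚ) / ((N : ℚ) + (n + 1 : ℕ))))) := by
  have : (N : ℚ) + n + 1 ≠ 0 := by positivity
  have : (N : ℚ) + n + 2 ≠ 0 := by positivity
  push_cast
  field_simp
  ring

/-- Continued fraction convergents for the generating function of the
hypergeometric Cauchy numbers `c_{N,n}`, i.e. `f_N = (∑_n (-1)^n (N/(N+n)) X^n)⁻¹` in `ℚ⟦X⟧`.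
With `P n = (N+n)!/N!` and `Q n = ((N+n)!/N!) · ∑_{i=0}^n (-1)^i (N/(N+i)) X^i`:
(i) for all `n ≥ 2` (written at index `n+2`) both satisfy
`P_n = (N+n - (N+n-1)X) P_{n-1} + (N+n-1)^2 X P_{n-2}`;
(ii) for all `n ≥ 0`, `Q n · f_N ≡ P n (mod X^{n+1})`. -/
theorem statement7 (N : ℕ) (hN : 1 ≤ N)
    (f : PowerSeries ℚ)
    (hf : f = (PowerSeries.mk fun n => (-1) ^ n * ((N : ℚ) / ((N : ℚ) + n)))⁻¹)
    (P Q : ℕ → PowerSeries ℚ)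
    (hP : ∀ n, P n = PowerSeries.C (((N + n).factorial : ℚ) / (N.factorial : ℚ)))
    (hQ : ∀ n, Q n = PowerSeries.C (((N + n).factorial : ℚ) / (N.factorial : ℚ)) *
      ∑ i ∈ Finset.range (n + 1),
        PowerSeries.C ((-1) ^ i * ((N : ℚ) / ((N : ℚ) + i))) * PowerSeries.X ^ i) :
    (∀ n : ℕ,
      P (n + 2) = (PowerSeries.C ((N : ℚ) + n + 2) -
            PowerSeries.C ((N : ℚ) + n + 1) * PowerSeries.X) * P (n + 1)
          + PowerSeries.C (((N : ℚ) + n + 1) ^ 2) * PowerSeries.X * P n ∧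
      Q (n + 2) = (PowerSeries.C ((N : ℚ) + n + 2) -
            PowerSeries.C ((N : ℚ) + n + 1) * PowerSeries.X) * Q (n + 1)
          + PowerSeries.C (((N : ℚ) + n + 1) ^ 2) * PowerSeries.X * Q n) ∧
    (∀ n : ℕ, ∀ k ≤ n,
      PowerSeries.coeff k (Q n * f) = PowerSeries.coeff k (P n)) := by
  set a : ℕ → ℚ := fun i => (-1) ^ i * ((N : ℚ) / ((N : ℚ) + i))
  simp only [sum_range_C_mul_X_pow_eq_trunc] at hQ
  refine ⟨fun n => ⟨?_, ?_⟩, fun n k hk => ?_⟩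
  · simpa only [hP, mul_one] using
      C_factorial_div_factorial_mul_three_term_recurrence N (S := fun _ => 1) n (by simp)
  · simp only [hQ]
    exact C_factorial_div_factorial_mul_three_term_recurrence N
      (S := fun m => trunc (m + 1) (mk a)) n
      (C_mul_coe_trunc_sub_eq a n (add_two_mul_neg_one_pow_div_add N n))
  · have hconst : constantCoeff (mk a) ≠ 0 := by
      simp [a]
      omega
    rw [hQ, hP, hf, mul_assoc, coeff_C_mul,
      coeff_coe_trunc_mul_inv_of_lt_s7 _ hconst (Nat.lt_succ_of_le hk), ← coeff_C_mul, mul_one]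
end

section
/- Fix an integer N ≥ 0. In ℚ[[X]] let f = (∑_{n=0}^{∞} ((2N)!/(2N+2n)!) X^{2n})^{-1} (the generating function ∑_{n≥0} E_{N,n} X^n/n! of the hypergeometric Euler numbers). Define P_m(X) = (2N+2m)!/(2N)! and Q_m(X) = (2N+2m)! · ∑_{n=0}^{m} X^{2n}/(2N+2n)!. Then: (i) for all m ≥ 2, P_m(X) = ((2N+2m−1)(2N+2m) + X^2) P_{m-1}(X) − (2N+2m−3)(2N+2m−2) X^2 P_{m-2}(X), and the same recurrence holds for Q_m; (ii) for all m ≥ 0, Q_m(X) · f ≡ P_m(X) (mod X^{2m+2}). -/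
open Finset PowerSeries

/-!
Both `P m` and `Q m` satisfy the first-order step
`u (m+1) = (2N+2m+1)(2N+2m+2) u m + c X^(2m+2)` (with `c = 0` for `P`, `c = 1` for `Q`), and
eliminating `c X^(2m+2)` between two consecutive steps gives the three-term recurrence.
For the congruence, write `g = f⁻¹`: `Q m` is `(2N+2m)!` times the truncation below degree
`2m+2` of `g / (2N)!`, so `Q m ≡ P m * g`, and multiplying by `f` gives `Q m * f ≡ P m`.
-/

namespace PowerSeries

theorem X_pow_dvd_mul_inv_sub {k : Type*} [Field k] {φ ψ g : k⟦X⟧} {n : ℕ}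
    (hg : constantCoeff g ≠ 0) (h : X ^ n ∣ φ - ψ * g) : X ^ n ∣ φ * g⁻¹ - ψ := by
  have hfactor : φ * g⁻¹ - ψ = (φ - ψ * g) * g⁻¹ := by
    rw [sub_mul, mul_assoc, PowerSeries.mul_inv_cancel g hg, mul_one]
  rw [hfactor]
  exact dvd_mul_of_dvd_left h _

theorem X_pow_dvd_evenPart_sub_sum {R : Type*} [Ring R] (a : ℕ → R) (m : ℕ) :
    X ^ (2 * m + 2) ∣ (mk fun k => if Even k then a k else 0) -
      ∑ n ∈ range (m + 1), C (a (2 * n)) * X ^ (2 * n) := by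
  rw [X_pow_dvd_iff]
  intro j hj
  simp only [map_sub, coeff_mk, map_sum, coeff_C_mul_X_pow]
  split_ifs with hj_even
  · obtain ⟨t, rfl⟩ := hj_even
    rw [sum_eq_single_of_mem t (mem_range.mpr (by omega)) fun n _ hn => if_neg (by omega),
      if_pos (two_mul t).symm, two_mul, sub_self]
  · rw [sum_eq_zero fun n _ => if_neg fun h => hj_even ⟨n, by omega⟩, sub_self]

end PowerSeries

theorem three_term_recurrence_of_step {R : Type*} [CommRing R] {a : ℕ → R} {c : R⟦X⟧}
    {u : ℕ → R⟦X⟧} (h : ∀ m, u (m + 1) = C (a m) * u m + c * X ^ (2 * (m + 1))) (m : ℕ) :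
    u (m + 2) = (C (a (m + 1)) + X ^ 2) * u (m + 1) - C (a m) * X ^ 2 * u m := by
  linear_combination h (m + 1) - X ^ 2 * h m

theorem cast_factorial_two_mul_add_succ (N m : ℕ) :
    ((2 * N + 2 * (m + 1)).factorial : ℚ) =
      (2 * N + 2 * m + 1) * (2 * N + 2 * m + 2) * (2 * N + 2 * m).factorial := by
  rw [show 2 * N + 2 * (m + 1) = 2 * N + 2 * m + 1 + 1 by ring, Nat.factorial_succ,
    Nat.factorial_succ]
  push_cast
  ring

/-- Continued fraction convergents for the generating function of the
hypergeometric Euler numbers `E_{N,n}`, i.e. `f = (∑_n ((2N)!/(2N+2n)!) X^{2n})⁻¹` in `ℚ⟦X⟧`.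
With `P m = (2N+2m)!/(2N)!` and `Q m = (2N+2m)! · ∑_{n=0}^m X^{2n}/(2N+2n)!`:
(i) for all `m ≥ 2` (written at index `m+2`) both satisfy
`P_m = ((2N+2m-1)(2N+2m) + X²) P_{m-1} - (2N+2m-3)(2N+2m-2) X² P_{m-2}`;
(ii) for all `m ≥ 0`, `Q m · f ≡ P m (mod X^{2m+2})`. -/
theorem statement9 (N : ℕ)
    (f : PowerSeries ℚ)
    (hf : f = (PowerSeries.mk fun k =>
      if Even k then ((2 * N).factorial : ℚ) / ((2 * N + k).factorial : ℚ) else 0)⁻¹)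
    (P Q : ℕ → PowerSeries ℚ)
    (hP : ∀ m, P m = PowerSeries.C (((2 * N + 2 * m).factorial : ℚ) /
      ((2 * N).factorial : ℚ)))
    (hQ : ∀ m, Q m = PowerSeries.C (((2 * N + 2 * m).factorial : ℚ)) *
      ∑ n ∈ Finset.range (m + 1),
        PowerSeries.C (1 / ((2 * N + 2 * n).factorial : ℚ)) * PowerSeries.X ^ (2 * n)) :
    (∀ m : ℕ,
      P (m + 2) = (PowerSeries.C ((2 * (N : ℚ) + 2 * m + 3) * (2 * (N : ℚ) + 2 * m + 4)) +
            PowerSeries.X ^ 2) * P (m + 1)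
          - PowerSeries.C ((2 * (N : ℚ) + 2 * m + 1) * (2 * (N : ℚ) + 2 * m + 2)) *
              PowerSeries.X ^ 2 * P m ∧
      Q (m + 2) = (PowerSeries.C ((2 * (N : ℚ) + 2 * m + 3) * (2 * (N : ℚ) + 2 * m + 4)) +
            PowerSeries.X ^ 2) * Q (m + 1)
          - PowerSeries.C ((2 * (N : ℚ) + 2 * m + 1) * (2 * (N : ℚ) + 2 * m + 2)) *
              PowerSeries.X ^ 2 * Q m) ∧
    (∀ m : ℕ, ∀ k ≤ 2 * m + 1,
      PowerSeries.coeff k (Q m * f) = PowerSeries.coeff k (P m)) := by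
  set a : ℕ → ℚ := fun m => (2 * N + 2 * m + 1) * (2 * N + 2 * m + 2)
  have ha_succ (m : ℕ) : a (m + 1) = (2 * N + 2 * m + 3) * (2 * N + 2 * m + 4) := by
    simp only [a]; push_cast; ring
  have hP_step (m : ℕ) : P (m + 1) = C (a m) * P m + 0 * X ^ (2 * (m + 1)) := by
    rw [hP, hP, cast_factorial_two_mul_add_succ, zero_mul, add_zero, ← map_mul, mul_div_assoc]
  have hQ_step (m : ℕ) : Q (m + 1) = C (a m) * Q m + 1 * X ^ (2 * (m + 1)) := by
    rw [hQ, hQ, sum_range_succ, mul_add, ← mul_assoc, ← map_mul,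
      mul_one_div_cancel (by positivity), map_one, cast_factorial_two_mul_add_succ, map_mul,
      mul_assoc]
  set g' : ℚ⟦X⟧ := mk fun k => if Even k then 1 / ((2 * N + k).factorial : ℚ) else 0
  set g : ℚ⟦X⟧ := mk fun k =>
    if Even k then ((2 * N).factorial : ℚ) / ((2 * N + k).factorial : ℚ) else 0
  have hg0 : constantCoeff g ≠ 0 := by
    simp [g, ← coeff_zero_eq_constantCoeff_apply, Nat.factorial_ne_zero]
  refine ⟨fun m => ⟨?_, ?_⟩, fun m k hk => ?_⟩
  · rw [← ha_succ]; exact three_term_recurrence_of_step hP_step m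
  · rw [← ha_succ]; exact three_term_recurrence_of_step hQ_step m
  · have hPg : P m * g = C ((2 * N + 2 * m).factorial : ℚ) * g' := by
      ext j
      simp only [hP, g, g', coeff_C_mul, coeff_mk, mul_ite, mul_zero]
      congr 1
      field_simp
    have hdvd : X ^ (2 * m + 2) ∣ Q m - P m * g := by
      rw [hPg, hQ, ← mul_sub]
      exact dvd_mul_of_dvd_right (dvd_sub_comm.mp (X_pow_dvd_evenPart_sub_sum _ m)) _
    rw [hf, ← sub_eq_zero, ← map_sub]
    exact X_pow_dvd_iff.mp (X_pow_dvd_mul_inv_sub hg0 hdvd) k (by omega)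
end

section
/- In ℚ[[X]], let C = ∑_{n≥0} X^{2n}/(2n)! (the formal power series of cosh X) and let f = C^{-1} = ∑_{n≥0} E_n X^n/n!, the generating function of the Euler numbers. Define Q_m(X) = (2m)! · ∑_{n=0}^{m} X^{2n}/(2n)!. Then: (i) for all m ≥ 2, Q_m(X) = ((2m−1)(2m) + X^2) Q_{m-1}(X) − (2m−3)(2m−2) X^2 Q_{m-2}(X), with Q_0 = 1 and Q_1(X) = 2 + X^2; (ii) for all m ≥ 0, (∑_{n=0}^{m} X^{2n}/(2n)!) · f ≡ 1 (mod X^{2m+2}). -/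
open Finset PowerSeries

/-!
Both parts come from the partial sums `T_m = ∑_{n ≤ m} X^{2n}/(2n)!` of `cosh X`.
(i) Adding the next term gives `Q_{m+1} = (2m+1)(2m+2) Q_m + X^{2m+2}`; subtracting `X²` times
this identity from its instance at `m + 1` eliminates the power of `X` and leaves the three-term
recurrence. (ii) `cosh X - T_m` is divisible by `X^{2m+2}`, hence so is
`1 - T_m · f = (cosh X - T_m) · f`.
-/

namespace PowerSeries

variable {K : Type*} [Field K]

def cosh (K : Type*) [Field K] : K⟦X⟧ :=
  mk fun k => if Even k then 1 / (k.factorial : K) else 0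

noncomputable def coshTrunc (m : ℕ) : K⟦X⟧ :=
  ∑ n ∈ range (m + 1), C (1 / ((2 * n).factorial : K)) * X ^ (2 * n)

theorem constantCoeff_cosh : constantCoeff (cosh K) = 1 := by
  simp [cosh]

theorem coshTrunc_zero : coshTrunc 0 = (1 : K⟦X⟧) := by
  simp [coshTrunc]

theorem coeff_coshTrunc_of_lt {m i : ℕ} (hi : i < 2 * m + 2) :
    coeff i (coshTrunc m) = coeff i (cosh K) := by
  simp only [coshTrunc, cosh, map_sum, coeff_C_mul_X_pow, coeff_mk]
  split_ifs with he
  · obtain ⟨j, rfl⟩ := he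
    rw [sum_eq_single j]
    · simp [two_mul]
    · intro n _ hn
      simp only [ite_eq_right_iff]
      omega
    · simp only [mem_range]
      omega
  · refine sum_eq_zero fun n _ => if_neg fun h => he ⟨n, by omega⟩

theorem X_pow_dvd_cosh_sub_coshTrunc (m : ℕ) : X ^ (2 * m + 2) ∣ cosh K - coshTrunc m :=
  X_pow_dvd_iff.2 fun i hi => by rw [map_sub, coeff_coshTrunc_of_lt hi, sub_self]

theorem coeff_mul_inv_eq_coeff_one {φ ψ : K⟦X⟧} {N k : ℕ} (hφ : constantCoeff φ ≠ 0)
    (hdvd : X ^ N ∣ φ - ψ) (hk : k < N) : coeff k (ψ * φ⁻¹) = coeff k 1 := by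
  have h : 1 - ψ * φ⁻¹ = (φ - ψ) * φ⁻¹ := by
    rw [sub_mul, PowerSeries.mul_inv_cancel φ hφ]
  rw [← sub_eq_zero, ← map_sub, ← neg_sub, map_neg, neg_eq_zero, h]
  exact X_pow_dvd_iff.1 (dvd_mul_of_dvd_left hdvd _) k hk

theorem factorial_mul_coshTrunc_succ [CharZero K] (m : ℕ) :
    C ((2 * (m + 1)).factorial : K) * coshTrunc (m + 1) =
      C ((2 * (m : K) + 1) * (2 * m + 2)) * (C ((2 * m).factorial : K) * coshTrunc m) +
        X ^ (2 * (m + 1)) := by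
  have hfact : ((2 * (m + 1)).factorial : K) =
      (2 * (m : K) + 1) * (2 * m + 2) * (2 * m).factorial := by
    rw [show 2 * (m + 1) = 2 * m + 1 + 1 by ring, Nat.factorial_succ, Nat.factorial_succ]
    push_cast; ring
  have hinv : C ((2 * (m + 1)).factorial : K) * C (1 / ((2 * (m + 1)).factorial : K)) = 1 := by
    rw [← map_mul, mul_one_div_cancel (Nat.cast_ne_zero.2 (Nat.factorial_ne_zero _)), map_one]
  rw [coshTrunc, sum_range_succ, ← coshTrunc, mul_add, ← mul_assoc, hinv, one_mul, hfact,
    map_mul, mul_assoc]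

end PowerSeries

/-- In `ℚ⟦X⟧`, let `C = cosh X = ∑_n X^{2n}/(2n)!` and `f = C⁻¹`
(the generating function of the Euler numbers).  With `Q m = (2m)! · ∑_{n=0}^m X^{2n}/(2n)!`:
(i) for all `m ≥ 2` (written at index `m+2`),
`Q_m = ((2m-1)(2m) + X²) Q_{m-1} - (2m-3)(2m-2) X² Q_{m-2}`, with `Q_0 = 1`, `Q_1 = 2 + X²`;
(ii) for all `m ≥ 0`, `(∑_{n=0}^m X^{2n}/(2n)!) · f ≡ 1 (mod X^{2m+2})`. -/
theorem statement10 (Ch f : PowerSeries ℚ)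
    (hCh : Ch = PowerSeries.mk fun k => if Even k then 1 / (k.factorial : ℚ) else 0)
    (hf : f = Ch⁻¹)
    (Q : ℕ → PowerSeries ℚ)
    (hQ : ∀ m, Q m = PowerSeries.C (((2 * m).factorial : ℚ)) *
      ∑ n ∈ Finset.range (m + 1),
        PowerSeries.C (1 / ((2 * n).factorial : ℚ)) * PowerSeries.X ^ (2 * n)) :
    (∀ m : ℕ,
      Q (m + 2) = (PowerSeries.C ((2 * (m : ℚ) + 3) * (2 * (m : ℚ) + 4)) +
            PowerSeries.X ^ 2) * Q (m + 1)
          - PowerSeries.C ((2 * (m : ℚ) + 1) * (2 * (m : ℚ) + 2)) *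
              PowerSeries.X ^ 2 * Q m) ∧
    Q 0 = 1 ∧ Q 1 = PowerSeries.C (2 : ℚ) + PowerSeries.X ^ 2 ∧
    (∀ m : ℕ, ∀ k ≤ 2 * m + 1,
      PowerSeries.coeff (R := ℚ) k
        ((∑ n ∈ Finset.range (m + 1),
            PowerSeries.C (1 / ((2 * n).factorial : ℚ)) * PowerSeries.X ^ (2 * n)) * f) =
        PowerSeries.coeff (R := ℚ) k 1) := by
  have hQ' : ∀ m, Q m = C ((2 * m).factorial : ℚ) * coshTrunc m := hQ
  have hQ_succ : ∀ m : ℕ,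
      Q (m + 1) = C ((2 * (m : ℚ) + 1) * (2 * m + 2)) * Q m + X ^ (2 * (m + 1)) :=
    fun m => by rw [hQ', hQ', factorial_mul_coshTrunc_succ]
  have hcosh : Ch = cosh ℚ := hCh
  subst hf hcosh
  refine ⟨fun m => ?_, by simp [hQ', coshTrunc_zero], ?_, fun m k hk =>
    coeff_mul_inv_eq_coeff_one (by simp [constantCoeff_cosh]) (X_pow_dvd_cosh_sub_coshTrunc m)
      (Nat.lt_succ_of_le hk)⟩
  · have hcoeff : (2 * ((m + 1 : ℕ) : ℚ) + 1) * (2 * ((m + 1 : ℕ) : ℚ) + 2) =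
        (2 * (m : ℚ) + 3) * (2 * m + 4) := by
      push_cast; ring
    have hpow : (X : ℚ⟦X⟧) ^ (2 * (m + 1 + 1)) = X ^ 2 * X ^ (2 * (m + 1)) := by
      rw [← pow_add]; ring_nf
    have h₁ := hQ_succ (m + 1)
    rw [hcoeff, hpow] at h₁
    linear_combination h₁ - X ^ 2 * hQ_succ m
  · simpa [hQ', coshTrunc_zero] using hQ_succ 0
end

section
/- Fix an integer N ≥ 0. In ℚ[[X]] let f = (∑_{n=0}^{∞} ((2N+1)!/(2N+2n+1)!) X^{2n})^{-1} (the generating function ∑_{n≥0} Ê_{N,n} X^n/n! of the hypergeometric Euler numbers of the second kind). Define P_m(X) = (2N+2m+1)!/(2N+1)! and Q_m(X) = (2N+2m+1)! · ∑_{n=0}^{m} X^{2n}/(2N+2n+1)!. Then: (i) for all m ≥ 2, P_m(X) = ((2N+2m)(2N+2m+1) + X^2) P_{m-1}(X) − (2N+2m−2)(2N+2m−1) X^2 P_{m-2}(X), and the same recurrence holds for Q_m; (ii) for all m ≥ 0, Q_m(X) · f ≡ P_m(X) (mod X^{2m+2}). -/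
open Finset PowerSeries

/-!
Both recurrences come from a single step: `P (m+1) = b_m P m` and `Q (m+1) = b_m Q m + X^(2m+2)`
with `b_m = (2N+2m+2)(2N+2m+3)`; since the error terms `X^(2m+2)` get multiplied by `X²` at each
step, any such sequence satisfies the three-term recurrence. For the congruence, `Q m` is exactly the
truncation below degree `2m+2` of `P m · g`, where `g = f⁻¹`, so `Q m · f - P m = (Q m - P m · g) · f`
is divisible by `X^(2m+2)`.
-/

theorem three_term_of_step {R : Type*} [CommRing R] {u b e : ℕ → R} {x : R}
    (hu : ∀ m, u (m + 1) = b m * u m + e m) (he : ∀ m, e (m + 1) = x * e m) (m : ℕ) :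
    u (m + 2) = (b (m + 1) + x) * u (m + 1) - b m * x * u m := by
  linear_combination hu (m + 1) + he m - x * hu m

namespace HypergeometricEuler

variable (N : ℕ)

noncomputable def oddFactorialSeries : PowerSeries ℚ :=
  PowerSeries.mk fun k =>
    if Even k then ((2 * N + 1).factorial : ℚ) / ((2 * N + k + 1).factorial : ℚ) else 0

noncomputable def convergentNum (m : ℕ) : PowerSeries ℚ :=
  C (((2 * N + 2 * m + 1).factorial : ℚ) / ((2 * N + 1).factorial : ℚ))

noncomputable def convergentDen (m : ℕ) : PowerSeries ℚ :=
  C (((2 * N + 2 * m + 1).factorial : ℚ)) *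
    ∑ n ∈ range (m + 1), C (1 / ((2 * N + 2 * n + 1).factorial : ℚ)) * X ^ (2 * n)

def stepFactor (m : ℕ) : ℚ := (2 * (N : ℚ) + 2 * m + 2) * (2 * (N : ℚ) + 2 * m + 3)

theorem stepFactor_succ (m : ℕ) :
    stepFactor N (m + 1) = (2 * (N : ℚ) + 2 * m + 4) * (2 * (N : ℚ) + 2 * m + 5) := by
  unfold stepFactor; push_cast; ring

theorem factorial_succ_eq_stepFactor_mul (m : ℕ) :
    ((2 * N + 2 * (m + 1) + 1).factorial : ℚ) =
      stepFactor N m * ((2 * N + 2 * m + 1).factorial : ℚ) := by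
  rw [show 2 * N + 2 * (m + 1) + 1 = 2 * N + 2 * m + 1 + 1 + 1 by ring,
    Nat.factorial_succ, Nat.factorial_succ, stepFactor]
  push_cast; ring

theorem convergentNum_succ (m : ℕ) :
    convergentNum N (m + 1) = C (stepFactor N m) * convergentNum N m := by
  rw [convergentNum, convergentNum, ← map_mul, factorial_succ_eq_stepFactor_mul, mul_div_assoc]

theorem convergentDen_succ (m : ℕ) :
    convergentDen N (m + 1) = C (stepFactor N m) * convergentDen N m + X ^ (2 * (m + 1)) := by
  have hF : ((2 * N + 2 * (m + 1) + 1).factorial : ℚ) ≠ 0 := by positivity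
  rw [convergentDen, convergentDen, sum_range_succ, mul_add, ← mul_assoc, ← map_mul,
    mul_one_div_cancel hF, map_one, one_mul, factorial_succ_eq_stepFactor_mul, map_mul, mul_assoc]

theorem coeff_convergentDen {m j : ℕ} (hj : j < 2 * m + 2) :
    coeff j (convergentDen N m) = coeff j (convergentNum N m * oddFactorialSeries N) := by
  simp only [convergentDen, convergentNum, oddFactorialSeries, coeff_C_mul, coeff_mk, map_sum,
    coeff_X_pow]
  by_cases hEven : Even j
  · obtain ⟨t, rfl⟩ := hEven
    rw [if_pos ⟨t, rfl⟩, sum_eq_single t]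
    · rw [if_pos (by omega), mul_one, show 2 * N + (t + t) + 1 = 2 * N + 2 * t + 1 by omega]
      field_simp
    · intro n _ hn
      rw [if_neg (by omega), mul_zero]
    · intro ht
      exact absurd (mem_range.2 (by omega)) ht
  · rw [if_neg hEven, mul_zero, sum_eq_zero, mul_zero]
    intro n _
    rw [if_neg (fun h => hEven ⟨n, by omega⟩), mul_zero]

theorem coeff_convergentDen_mul_inv {m k : ℕ} (hk : k ≤ 2 * m + 1) :
    coeff k (convergentDen N m * (oddFactorialSeries N)⁻¹) = coeff k (convergentNum N m) := by
  set g := oddFactorialSeries N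
  have hg : constantCoeff g ≠ 0 := by
    simp [g, oddFactorialSeries, Nat.factorial_ne_zero]
  have hdvd : X ^ (2 * m + 2) ∣ convergentDen N m * g⁻¹ - convergentNum N m := by
    have hsplit : convergentDen N m * g⁻¹ - convergentNum N m =
        (convergentDen N m - convergentNum N m * g) * g⁻¹ := by
      rw [sub_mul, mul_assoc, PowerSeries.mul_inv_cancel g hg, mul_one]
    rw [hsplit]
    refine Dvd.dvd.mul_right (X_pow_dvd_iff.2 fun j hj => ?_) _
    rw [map_sub, coeff_convergentDen N hj, sub_self]
  simpa [sub_eq_zero] using X_pow_dvd_iff.1 hdvd k (by omega)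

end HypergeometricEuler

open HypergeometricEuler in
/-- Continued fraction convergents for the generating function of the
hypergeometric Euler numbers of the second kind `Ê_{N,n}`, i.e.
`f = (∑_n ((2N+1)!/(2N+2n+1)!) X^{2n})⁻¹` in `ℚ⟦X⟧`.  With
`P m = (2N+2m+1)!/(2N+1)!` and `Q m = (2N+2m+1)! · ∑_{n=0}^m X^{2n}/(2N+2n+1)!`:
(i) for all `m ≥ 2` (written at index `m+2`) both satisfy
`P_m = ((2N+2m)(2N+2m+1) + X²) P_{m-1} - (2N+2m-2)(2N+2m-1) X² P_{m-2}`;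
(ii) for all `m ≥ 0`, `Q m · f ≡ P m (mod X^{2m+2})`. -/
theorem statement11 (N : ℕ)
    (f : PowerSeries ℚ)
    (hf : f = (PowerSeries.mk fun k =>
      if Even k then ((2 * N + 1).factorial : ℚ) / ((2 * N + k + 1).factorial : ℚ) else 0)⁻¹)
    (P Q : ℕ → PowerSeries ℚ)
    (hP : ∀ m, P m = PowerSeries.C (((2 * N + 2 * m + 1).factorial : ℚ) /
      ((2 * N + 1).factorial : ℚ)))
    (hQ : ∀ m, Q m = PowerSeries.C (((2 * N + 2 * m + 1).factorial : ℚ)) *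
      ∑ n ∈ Finset.range (m + 1),
        PowerSeries.C (1 / ((2 * N + 2 * n + 1).factorial : ℚ)) * PowerSeries.X ^ (2 * n)) :
    (∀ m : ℕ,
      P (m + 2) = (PowerSeries.C ((2 * (N : ℚ) + 2 * m + 4) * (2 * (N : ℚ) + 2 * m + 5)) +
            PowerSeries.X ^ 2) * P (m + 1)
          - PowerSeries.C ((2 * (N : ℚ) + 2 * m + 2) * (2 * (N : ℚ) + 2 * m + 3)) *
              PowerSeries.X ^ 2 * P m ∧
      Q (m + 2) = (PowerSeries.C ((2 * (N : ℚ) + 2 * m + 4) * (2 * (N : ℚ) + 2 * m + 5)) +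
            PowerSeries.X ^ 2) * Q (m + 1)
          - PowerSeries.C ((2 * (N : ℚ) + 2 * m + 2) * (2 * (N : ℚ) + 2 * m + 3)) *
              PowerSeries.X ^ 2 * Q m) ∧
    (∀ m : ℕ, ∀ k ≤ 2 * m + 1,
      PowerSeries.coeff k (Q m * f) = PowerSeries.coeff k (P m)) := by
  obtain rfl : f = (oddFactorialSeries N)⁻¹ := hf
  obtain rfl : P = convergentNum N := funext hP
  obtain rfl : Q = convergentDen N := funext hQ
  refine ⟨fun m => ⟨?_, ?_⟩, fun m k hk => coeff_convergentDen_mul_inv N hk⟩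
  · have h := three_term_of_step (u := convergentNum N) (b := fun m => C (stepFactor N m))
      (e := fun _ => 0) (x := X ^ 2) (fun m => by rw [convergentNum_succ, add_zero])
      (fun _ => (mul_zero _).symm) m
    rwa [stepFactor_succ] at h
  · have h := three_term_of_step (b := fun m => C (stepFactor N m)) (x := X ^ 2)
      (convergentDen_succ N) (fun m => by ring) m
    rwa [stepFactor_succ] at h
end

section
/- In ℚ[[X]], let S = ∑_{n≥0} X^{2n}/(2n+1)! (the formal power series of (sinh X)/X) and let f = S^{-1} = ∑_{n≥0} Ê_n X^n/n!, the generating function of the Euler numbers of the second kind. Define Q_m(X) = (2m+1)! · ∑_{n=0}^{m} X^{2n}/(2n+1)!. Then: (i) for all m ≥ 2, Q_m(X) = ((2m)(2m+1) + X^2) Q_{m-1}(X) − (2m−2)(2m−1) X^2 Q_{m-2}(X), with Q_0 = 1 and Q_1(X) = 6 + X^2; (ii) for all m ≥ 0, (∑_{n=0}^{m} X^{2n}/(2n+1)!) · f ≡ 1 (mod X^{2m+2}). -/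
open Finset PowerSeries

/-!
The recurrence for `Q` comes from `Q_m = (2m)(2m+1) Q_{m-1} + X^{2m}`, which, applied at `m` and
at `m - 1`, lets the term `X² Q_{m-1}` absorb `X^{2m}`.  The congruence holds because the `m`-th
partial sum agrees with `S` up to degree `2m+1`, and `S f = 1`.
-/

section SinhDivX

variable (K : Type*) [Field K]

noncomputable def sinhDivX : K⟦X⟧ :=
  mk fun k => if Even k then 1 / ((k + 1).factorial : K) else 0

noncomputable def sinhDivXPartial (m : ℕ) : K⟦X⟧ :=
  ∑ n ∈ range (m + 1), C (1 / ((2 * n + 1).factorial : K)) * X ^ (2 * n)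

noncomputable def scaledSinhDivXPartial (m : ℕ) : K⟦X⟧ :=
  C ((2 * m + 1).factorial : K) * sinhDivXPartial K m

variable {K}

theorem constantCoeff_sinhDivX : constantCoeff (sinhDivX K) = 1 := by
  simp [sinhDivX, constantCoeff_mk]

theorem coeff_sinhDivXPartial_of_lt {m i : ℕ} (hi : i < 2 * m + 2) :
    coeff i (sinhDivXPartial K m) = coeff i (sinhDivX K) := by
  simp only [sinhDivXPartial, sinhDivX, map_sum, coeff_C_mul, coeff_X_pow, coeff_mk]
  by_cases hev : Even i
  · obtain ⟨j, rfl⟩ := hev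
    rw [sum_eq_single j (fun b _ hb => by rw [if_neg (by omega), mul_zero])
      (fun hj => absurd (mem_range.mpr (by omega)) hj), if_pos (by omega), if_pos ⟨j, rfl⟩,
      mul_one, two_mul]
  · rw [if_neg hev]
    exact sum_eq_zero fun b _ => by rw [if_neg (fun h => hev ⟨b, by omega⟩), mul_zero]

theorem X_pow_dvd_sinhDivXPartial_sub (m : ℕ) :
    X ^ (2 * m + 2) ∣ sinhDivXPartial K m - sinhDivX K :=
  X_pow_dvd_iff.mpr fun i hi => by rw [map_sub, coeff_sinhDivXPartial_of_lt hi, sub_self]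

theorem scaledSinhDivXPartial_zero : scaledSinhDivXPartial K 0 = 1 := by
  simp [scaledSinhDivXPartial, sinhDivXPartial]

theorem sinhDivXPartial_succ (m : ℕ) :
    sinhDivXPartial K (m + 1) =
      sinhDivXPartial K m + C (1 / ((2 * (m + 1) + 1).factorial : K)) * X ^ (2 * m + 2) :=
  sum_range_succ _ _

theorem scaledSinhDivXPartial_succ [CharZero K] (m : ℕ) :
    scaledSinhDivXPartial K (m + 1) =
      C ((2 * (m : K) + 2) * (2 * m + 3)) * scaledSinhDivXPartial K m + X ^ (2 * m + 2) := by
  have hfact : ((2 * (m + 1) + 1).factorial : K) =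
      (2 * (m : K) + 2) * (2 * m + 3) * (2 * m + 1).factorial := by
    rw [show 2 * (m + 1) + 1 = 2 * m + 1 + 1 + 1 by ring, Nat.factorial_succ, Nat.factorial_succ]
    push_cast
    ring
  have hne : ((2 * (m + 1) + 1).factorial : K) ≠ 0 :=
    Nat.cast_ne_zero.mpr (Nat.factorial_ne_zero _)
  rw [scaledSinhDivXPartial, sinhDivXPartial_succ, mul_add, ← mul_assoc, ← map_mul, mul_one_div,
    div_self hne, map_one, one_mul, hfact, map_mul, mul_assoc, scaledSinhDivXPartial]

end SinhDivX

theorem PowerSeries.coeff_mul_eq_coeff_one_of_X_pow_dvd_sub {R : Type*} [CommRing R]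
    {P S f : R⟦X⟧} {N k : ℕ} (hSf : S * f = 1) (hPS : X ^ N ∣ P - S) (hk : k < N) :
    coeff k (P * f) = coeff k 1 := by
  have hdvd : X ^ N ∣ P * f - 1 := by
    rw [← hSf, ← sub_mul]
    exact dvd_mul_of_dvd_left hPS f
  exact sub_eq_zero.mp (by simpa only [map_sub] using X_pow_dvd_iff.mp hdvd k hk)

/-- In `ℚ⟦X⟧`, let `S = (sinh X)/X = ∑_n X^{2n}/(2n+1)!` and `f = S⁻¹`
(the generating function of the Euler numbers of the second kind).  With
`Q m = (2m+1)! · ∑_{n=0}^m X^{2n}/(2n+1)!`: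
(i) for all `m ≥ 2` (written at index `m+2`),
`Q_m = ((2m)(2m+1) + X²) Q_{m-1} - (2m-2)(2m-1) X² Q_{m-2}`, with `Q_0 = 1`, `Q_1 = 6 + X²`;
(ii) for all `m ≥ 0`, `(∑_{n=0}^m X^{2n}/(2n+1)!) · f ≡ 1 (mod X^{2m+2})`. -/
theorem statement12 (S f : PowerSeries ℚ)
    (hS : S = PowerSeries.mk fun k => if Even k then 1 / ((k + 1).factorial : ℚ) else 0)
    (hf : f = S⁻¹)
    (Q : ℕ → PowerSeries ℚ)
    (hQ : ∀ m, Q m = PowerSeries.C (((2 * m + 1).factorial : ℚ)) *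
      ∑ n ∈ Finset.range (m + 1),
        PowerSeries.C (1 / ((2 * n + 1).factorial : ℚ)) * PowerSeries.X ^ (2 * n)) :
    (∀ m : ℕ,
      Q (m + 2) = (PowerSeries.C ((2 * (m : ℚ) + 4) * (2 * (m : ℚ) + 5)) +
            PowerSeries.X ^ 2) * Q (m + 1)
          - PowerSeries.C ((2 * (m : ℚ) + 2) * (2 * (m : ℚ) + 3)) *
              PowerSeries.X ^ 2 * Q m) ∧
    Q 0 = 1 ∧ Q 1 = PowerSeries.C 6 + PowerSeries.X ^ 2 ∧
    (∀ m : ℕ, ∀ k ≤ 2 * m + 1,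
      PowerSeries.coeff k
        ((∑ n ∈ Finset.range (m + 1),
            PowerSeries.C (1 / ((2 * n + 1).factorial : ℚ)) * PowerSeries.X ^ (2 * n)) * f) =
        PowerSeries.coeff k 1) := by
  obtain rfl : Q = scaledSinhDivXPartial ℚ := funext hQ
  obtain rfl : S = sinhDivX ℚ := hS
  have hSf : sinhDivX ℚ * f = 1 := by
    rw [hf]
    exact PowerSeries.mul_inv_cancel _ (by rw [constantCoeff_sinhDivX]; exact one_ne_zero)
  refine ⟨fun m => ?_, scaledSinhDivXPartial_zero, ?_, fun m k hk =>
    coeff_mul_eq_coeff_one_of_X_pow_dvd_sub hSf (X_pow_dvd_sinhDivXPartial_sub m) (by omega)⟩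
  · have hm1 := scaledSinhDivXPartial_succ (K := ℚ) (m + 1)
    push_cast at hm1
    rw [show (2 * ((m : ℚ) + 1) + 2) * (2 * ((m : ℚ) + 1) + 3) = (2 * m + 4) * (2 * m + 5) by
      ring] at hm1
    linear_combination hm1 - X ^ 2 * scaledSinhDivXPartial_succ (K := ℚ) m
  · rw [scaledSinhDivXPartial_succ, scaledSinhDivXPartial_zero]
    norm_num
end

section
/- Let a, b be positive reals and m ≥ 1 an integer. Let h_n^{(m)}(a,b) = ∑_{k=1}^{n} 1/((k−1)a+b)^m for n ≥ 1 and h_0^{(m)}(a,b) = 0. Define P_n(X) = ((b|a)^{(n)})^m · ∑_{k=1}^{n} X^k/((k−1)a+b)^m and Q_n(X) = ((b|a)^{(n)})^m (1−X), where (b|a)^{(n)} = b(b+a)(b+2a)⋯(b+(n−1)a). Then: (i) for all n ≥ 3, P_n(X) = (((n−1)a+b)^m + ((n−2)a+b)^m X) P_{n-1}(X) − ((n−2)a+b)^{2m} X P_{n-2}(X), and the same recurrence holds for Q_n; (ii) for all n ≥ 0, Q_n(X) · (∑_{k≥1} h_k^{(m)}(a,b) X^k) ≡ P_n(X) (mod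 X^{n+1}) in ℝ[[X]]. -/
/-!
Both `P n` and `Q n` have the form `C (∏_{i<n} w i) * T n` with `w i = (i a + b)^m`; for such
sequences the three-term recurrence reduces to `w (n+2) (T (n+3) - T (n+2)) =
w (n+1) X (T (n+2) - T (n+1))`, which is trivial for `Q` and holds for `P` because both sides
equal `X^(n+3)`. For the congruence, `h` is the sequence of partial sums of `1 / w k`, so
`(1 - X) ∑ h k X^k = ∑ X^(k+1) / w k`, whose truncation below degree `n+1` is `P n / ∏_{i<n} w i`.
-/

open Finset PowerSeries

namespace PowerSeries

variable {R : Type*} [CommRing R]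

theorem one_sub_X_mul_mk_partialSums (c : ℕ → R) :
    (1 - X) * mk (fun n ↦ ∑ k ∈ range n, c k) = X * mk c := by
  ext (_ | k)
  · simp
  · rw [sub_mul, one_mul, map_sub, coeff_succ_X_mul, coeff_succ_X_mul, coeff_mk, coeff_mk,
      coeff_mk, sum_range_succ, add_sub_cancel_left]

theorem coeff_sum_C_mul_X_pow_succ {c : ℕ → R} {n k : ℕ} (hk : k ≤ n) :
    coeff k (∑ i ∈ range n, C (c i) * X ^ (i + 1)) = coeff k (X * mk c) := by
  simp only [map_sum, coeff_C_mul_X_pow]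
  rcases k with _ | j
  · simp
  · simp only [Nat.add_right_cancel_iff, sum_ite_eq, mem_range, coeff_succ_X_mul, coeff_mk]
    exact if_pos hk

theorem prod_mul_three_term_recurrence (w : ℕ → R) (T : ℕ → R⟦X⟧) (n : ℕ)
    (hT : C (w (n + 2)) * (T (n + 3) - T (n + 2)) =
      C (w (n + 1)) * X * (T (n + 2) - T (n + 1))) :
    C (∏ i ∈ range (n + 3), w i) * T (n + 3) =
      (C (w (n + 2)) + C (w (n + 1)) * X) * (C (∏ i ∈ range (n + 2), w i) * T (n + 2)) -
        C (w (n + 1) ^ 2) * X * (C (∏ i ∈ range (n + 1), w i) * T (n + 1)) := by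
  simp only [prod_range_succ, map_mul, map_pow]
  linear_combination C (∏ i ∈ range n, w i) * C (w n) * C (w (n + 1)) * hT

end PowerSeries

theorem increment_sum_inv_mul_X_pow {K : Type*} [Field K] {w : ℕ → K} {n : ℕ}
    (hw₁ : w (n + 1) ≠ 0) (hw₂ : w (n + 2) ≠ 0) :
    C (w (n + 2)) * (∑ k ∈ range (n + 3), C (1 / w k) * X ^ (k + 1) -
        ∑ k ∈ range (n + 2), C (1 / w k) * X ^ (k + 1)) =
      C (w (n + 1)) * X * (∑ k ∈ range (n + 2), C (1 / w k) * X ^ (k + 1) -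
        ∑ k ∈ range (n + 1), C (1 / w k) * X ^ (k + 1)) := by
  have hC : ∀ {x : K}, x ≠ 0 → C x * C (1 / x) = (1 : K⟦X⟧) := fun hx ↦ by
    rw [← map_mul, mul_one_div_cancel hx, map_one]
  rw [sum_range_succ _ (n + 2), sum_range_succ _ (n + 1)]
  linear_combination X ^ (n + 3) * (hC hw₂ - hC hw₁)

theorem statement13_general (a b : ℝ) (ha : 0 < a) (hb : 0 < b) (m : ℕ)
    (h : ℕ → ℝ) (hh : ∀ n, h n = ∑ k ∈ Finset.range n, 1 / ((k : ℝ) * a + b) ^ m)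
    (P Q : ℕ → PowerSeries ℝ)
    (hP : ∀ n, P n = PowerSeries.C ((∏ i ∈ Finset.range n, (b + (i : ℝ) * a)) ^ m) *
      ∑ k ∈ Finset.range n,
        PowerSeries.C (1 / ((k : ℝ) * a + b) ^ m) * PowerSeries.X ^ (k + 1))
    (hQ : ∀ n, Q n = PowerSeries.C ((∏ i ∈ Finset.range n, (b + (i : ℝ) * a)) ^ m) *
      (1 - PowerSeries.X)) :
    (∀ n : ℕ,
      P (n + 3) = (PowerSeries.C ((((n : ℝ) + 2) * a + b) ^ m) +
            PowerSeries.C ((((n : ℝ) + 1) * a + b) ^ m) * PowerSeries.X) * P (n + 2)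
          - PowerSeries.C ((((n : ℝ) + 1) * a + b) ^ (2 * m)) * PowerSeries.X * P (n + 1) ∧
      Q (n + 3) = (PowerSeries.C ((((n : ℝ) + 2) * a + b) ^ m) +
            PowerSeries.C ((((n : ℝ) + 1) * a + b) ^ m) * PowerSeries.X) * Q (n + 2)
          - PowerSeries.C ((((n : ℝ) + 1) * a + b) ^ (2 * m)) * PowerSeries.X * Q (n + 1)) ∧
    (∀ n : ℕ, ∀ k ≤ n,
      PowerSeries.coeff k (Q n * PowerSeries.mk h) = PowerSeries.coeff k (P n)) := by
  let w : ℕ → ℝ := fun k ↦ ((k : ℝ) * a + b) ^ m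
  have hw : ∀ k, w k ≠ 0 := fun k ↦ by positivity
  have hprod : ∀ n, (∏ i ∈ range n, (b + (i : ℝ) * a)) ^ m = ∏ i ∈ range n, w i := fun n ↦ by
    simp only [w, ← prod_pow, add_comm b]
  have hcoeffs : ∀ n : ℕ, (((n : ℝ) + 1) * a + b) ^ m = w (n + 1) ∧
      (((n : ℝ) + 2) * a + b) ^ m = w (n + 2) ∧
      (((n : ℝ) + 1) * a + b) ^ (2 * m) = w (n + 1) ^ 2 := fun n ↦ by
    simp only [w, ← pow_mul', Nat.cast_add, Nat.cast_one, Nat.cast_ofNat, true_and]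
  refine ⟨fun n ↦ ?_, fun n k hk ↦ ?_⟩
  · obtain ⟨h₁, h₂, h₁₁⟩ := hcoeffs n
    simp only [hP, hQ, hprod, h₁, h₂, h₁₁]
    exact ⟨prod_mul_three_term_recurrence w (fun n ↦ ∑ k ∈ range n, C (1 / w k) * X ^ (k + 1)) n
      (increment_sum_inv_mul_X_pow (hw _) (hw _)),
      prod_mul_three_term_recurrence w (fun _ ↦ 1 - X) n (by simp only [sub_self, mul_zero])⟩
  · have hh' : h = fun n ↦ ∑ k ∈ range n, 1 / w k := funext hh
    rw [hQ, hP, mul_assoc, hh', one_sub_X_mul_mk_partialSums, coeff_C_mul, coeff_C_mul,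
      coeff_sum_C_mul_X_pow_succ hk]

/-- For positive reals `a, b` and integer `m ≥ 1`, let
`h n = ∑_{k=1}^n 1/((k-1)a+b)^m` (generalized harmonic numbers of order `m`), written here
as `∑_{k ∈ range n} 1/(k·a+b)^m`.  With the generalized rising factorial
`(b|a)^{(n)} = ∏_{i<n} (b + i·a)`, define
`P n = ((b|a)^{(n)})^m · ∑_{k=1}^n X^k/((k-1)a+b)^m` and `Q n = ((b|a)^{(n)})^m (1 - X)`.
Then: (i) for all `n ≥ 3` (written at index `n+3`),
`P_n = (((n-1)a+b)^m + ((n-2)a+b)^m X) P_{n-1} - ((n-2)a+b)^{2m} X P_{n-2}`, same for `Q`;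
(ii) for all `n ≥ 0`, `Q n · ∑_{k≥1} h_k X^k ≡ P n (mod X^{n+1})` in `ℝ⟦X⟧`. -/
theorem statement13 (a b : ℝ) (ha : 0 < a) (hb : 0 < b) (m : ℕ) (hm : 1 ≤ m)
    (h : ℕ → ℝ) (hh : ∀ n, h n = ∑ k ∈ Finset.range n, 1 / ((k : ℝ) * a + b) ^ m)
    (P Q : ℕ → PowerSeries ℝ)
    (hP : ∀ n, P n = PowerSeries.C ((∏ i ∈ Finset.range n, (b + (i : ℝ) * a)) ^ m) *
      ∑ k ∈ Finset.range n,
        PowerSeries.C (1 / ((k : ℝ) * a + b) ^ m) * PowerSeries.X ^ (k + 1))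
    (hQ : ∀ n, Q n = PowerSeries.C ((∏ i ∈ Finset.range n, (b + (i : ℝ) * a)) ^ m) *
      (1 - PowerSeries.X)) :
    (∀ n : ℕ,
      P (n + 3) = (PowerSeries.C ((((n : ℝ) + 2) * a + b) ^ m) +
            PowerSeries.C ((((n : ℝ) + 1) * a + b) ^ m) * PowerSeries.X) * P (n + 2)
          - PowerSeries.C ((((n : ℝ) + 1) * a + b) ^ (2 * m)) * PowerSeries.X * P (n + 1) ∧
      Q (n + 3) = (PowerSeries.C ((((n : ℝ) + 2) * a + b) ^ m) +
            PowerSeries.C ((((n : ℝ) + 1) * a + b) ^ m) * PowerSeries.X) * Q (n + 2)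
          - PowerSeries.C ((((n : ℝ) + 1) * a + b) ^ (2 * m)) * PowerSeries.X * Q (n + 1)) ∧
    (∀ n : ℕ, ∀ k ≤ n,
      PowerSeries.coeff k (Q n * PowerSeries.mk h) = PowerSeries.coeff k (P n)) :=
  statement13_general a b ha hb m h hh P Q hP hQ
end

section
/- Let H_n = ∑_{k=1}^{n} 1/k denote the harmonic numbers, with H_0 = 0. Define P_n(X) = n! · ∑_{k=1}^{n} X^k/k and Q_n(X) = n! (1−X) in ℚ[X]. Then: (i) for all n ≥ 3, P_n(X) = (n + (n−1)X) P_{n-1}(X) − (n−1)^2 X P_{n-2}(X), and the same recurrence holds for Q_n; (ii) for all n ≥ 0, (1−X) · (∑_{k≥1} H_k X^k) ≡ ∑_{k=1}^{n} X^k/k (mod X^{n+1}) in ℚ[[X]]. -/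
open Finset Polynomial

/-!
Write `P n = n! · L n` with `L n = ∑_{k=1}^n X^k/k`. The three-term recurrence for `n! · a n`
reduces to `(n+1)(a (n+1) - a n) = x · n (a n - a (n-1))`, and `n (L n - L (n-1)) = X^n` is
geometric with ratio `X`, while for `Q` the differences vanish. Part (ii) is the identity
`(1 - X) · ∑ H_n X^n = ∑_{k≥1} X^k/k`, whose truncations at degree `n` are the partial sums.
-/

theorem factorial_mul_recurrence {R : Type*} [CommRing R] (a : ℕ → R) (x : R) (n : ℕ)
    (h : ((n : R) + 3) * (a (n + 3) - a (n + 2)) = x * (((n : R) + 2) * (a (n + 2) - a (n + 1)))) :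
    ((n + 3).factorial : R) * a (n + 3) =
      ((n : R) + 3 + ((n : R) + 2) * x) * ((n + 2).factorial * a (n + 2))
        - ((n : R) + 2) ^ 2 * x * ((n + 1).factorial * a (n + 1)) := by
  simp only [Nat.factorial_succ (n + 2), Nat.factorial_succ (n + 1)]
  push_cast
  linear_combination ((n : R) + 2) * (n + 1).factorial * h

noncomputable def logPartialSum (K : Type*) [Field K] (n : ℕ) : K[X] :=
  ∑ k ∈ range n, C (1 / ((k : K) + 1)) * X ^ (k + 1)

theorem succ_mul_logPartialSum_succ_sub {K : Type*} [Field K] [CharZero K] (m : ℕ) :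
    ((m : K[X]) + 1) * (logPartialSum K (m + 1) - logPartialSum K m) = X ^ (m + 1) := by
  have hm : ((m : K) + 1) * (1 / ((m : K) + 1)) = 1 :=
    mul_one_div_cancel (Nat.cast_add_one_ne_zero m)
  rw [logPartialSum, logPartialSum, sum_range_succ, add_sub_cancel_left, ← mul_assoc,
    ← C_eq_natCast, ← C_1, ← C_add, ← C_mul, hm, C_1, one_mul]

theorem PowerSeries.one_sub_X_mul_mk_partialSums_s14 {R : Type*} [Ring R] (f : ℕ → R) :
    (1 - X) * mk (fun n => ∑ k ∈ range n, f k) = X * mk f := by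
  ext (_ | n)
  · simp
  · rw [sub_mul, one_mul, map_sub, coeff_succ_X_mul, coeff_succ_X_mul, coeff_mk, coeff_mk,
      coeff_mk, sum_range_succ, add_sub_cancel_left]

theorem PowerSeries.coeff_sum_C_mul_X_pow_succ_s14 {R : Type*} [Semiring R] (f : ℕ → R)
    {n k : ℕ} (hk : k ≤ n) :
    coeff k (∑ j ∈ range n, C (f j) * X ^ (j + 1)) = coeff k (X * mk f) := by
  rcases k with _ | m
  · simp
  · simp [map_sum, coeff_X_pow, coeff_succ_X_mul, show m < n by omega]

/-- Let `H n = ∑_{k=1}^n 1/k` be the harmonic numbers (`H 0 = 0`).  With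
`P n = n! · ∑_{k=1}^n X^k/k` and `Q n = n!(1-X)` in `ℚ[X]`:
(i) for all `n ≥ 3` (written at index `n+3`),
`P_n = (n + (n-1)X) P_{n-1} - (n-1)² X P_{n-2}`, and the same for `Q`;
(ii) for all `n ≥ 0`, `(1-X) · ∑_{k≥1} H_k X^k ≡ ∑_{k=1}^n X^k/k (mod X^{n+1})` in `ℚ⟦X⟧`. -/
theorem statement14 (H : ℕ → ℚ) (hH : ∀ n, H n = ∑ k ∈ Finset.range n, 1 / ((k : ℚ) + 1))
    (P Q : ℕ → Polynomial ℚ)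
    (hP : ∀ n, P n = Polynomial.C ((n.factorial : ℚ)) *
      ∑ k ∈ Finset.range n, Polynomial.C (1 / ((k : ℚ) + 1)) * Polynomial.X ^ (k + 1))
    (hQ : ∀ n, Q n = Polynomial.C ((n.factorial : ℚ)) * (1 - Polynomial.X)) :
    (∀ n : ℕ,
      P (n + 3) = (Polynomial.C ((n : ℚ) + 3) +
            Polynomial.C ((n : ℚ) + 2) * Polynomial.X) * P (n + 2)
          - Polynomial.C (((n : ℚ) + 2) ^ 2) * Polynomial.X * P (n + 1) ∧
      Q (n + 3) = (Polynomial.C ((n : ℚ) + 3) +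
            Polynomial.C ((n : ℚ) + 2) * Polynomial.X) * Q (n + 2)
          - Polynomial.C (((n : ℚ) + 2) ^ 2) * Polynomial.X * Q (n + 1)) ∧
    (∀ n : ℕ, ∀ k ≤ n,
      PowerSeries.coeff (R := ℚ) k ((1 - PowerSeries.X) * PowerSeries.mk H) =
        PowerSeries.coeff (R := ℚ) k
          (∑ j ∈ Finset.range n,
            PowerSeries.C (R := ℚ) (1 / ((j : ℚ) + 1)) * PowerSeries.X ^ (j + 1))) := by
  refine ⟨fun n => ⟨?_, ?_⟩, fun n k hk => ?_⟩
  · have hL : ((n : ℚ[X]) + 3) * (logPartialSum ℚ (n + 3) - logPartialSum ℚ (n + 2)) =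
        X * (((n : ℚ[X]) + 2) * (logPartialSum ℚ (n + 2) - logPartialSum ℚ (n + 1))) := by
      have h2 := succ_mul_logPartialSum_succ_sub (K := ℚ) (n + 2)
      have h1 := succ_mul_logPartialSum_succ_sub (K := ℚ) (n + 1)
      push_cast at h1 h2
      linear_combination h2 - X * h1
    simp only [hP, map_add, map_pow, map_natCast, map_ofNat]
    exact factorial_mul_recurrence (logPartialSum ℚ) X n hL
  · simp only [hQ, map_add, map_pow, map_natCast, map_ofNat]
    exact factorial_mul_recurrence (fun _ => 1 - X) X n (by simp)
  · rw [show H = fun n => ∑ k ∈ range n, 1 / ((k : ℚ) + 1) from funext hH,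
      PowerSeries.one_sub_X_mul_mk_partialSums_s14, PowerSeries.coeff_sum_C_mul_X_pow_succ_s14 _ hk]
end

section
/- Let K be a field and let a, b, c, d, g₁, g₂, h₁, h₂, x ∈ K with c + d ≠ 0. Then the following identity of 2×2 matrices over K holds: [[a,b],[c,d]] · [[1,1],[1,0]] · [[g₁+h₁x, 1],[−h₁x, 0]] · [[g₂+h₂x, 1],[−g₁h₂x, 0]] = [[(a+b)/(c+d), 1],[1,0]] · [[(c+d)g₁+dh₁x, 1],[−((ad−bc)/(c+d))h₁x, 0]] · [[g₂+h₂x, 1],[−(c+d)g₁h₂x, 0]]. -/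
open Matrix

/-!
Multiplying `[[a, b], [c, d]]` by the continued-fraction step `[[1, 1], [1, 0]]` and factoring
out the step `[[(a + b)/(c + d), 1], [1, 0]]` leaves the upper triangular matrix
`[[c + d, c], [0, (ad - bc)/(c + d)]]`. Pushed through the next step `[[g₁ + h₁x, 1], [-h₁x, 0]]`
it changes that step and leaves `diag(1, c + d)`, which the step after that absorbs into its
partial numerator.
-/

theorem fin_two_eq_iff {α : Type*} {a b c d a' b' c' d' : α} :
    !![a, b; c, d] = !![a', b'; c', d'] ↔ a = a' ∧ b = b' ∧ c = c' ∧ d = d' := by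
  simp only [EmbeddingLike.apply_eq_iff_eq, vecCons_inj, and_true, and_assoc]

theorem mul_step_one_one_eq_step_mul_upper {K : Type*} [Field K] {a b c d : K} (hcd : c + d ≠ 0) :
    !![a, b; c, d] * !![1, 1; 1, 0] =
      !![(a + b) / (c + d), 1; 1, 0] * !![c + d, c; 0, (a * d - b * c) / (c + d)] := by
  rw [mul_fin_two, mul_fin_two, fin_two_eq_iff]
  refine ⟨?_, ?_, ?_, ?_⟩ <;> field_simp <;> ring

section

variable {R : Type*} [CommRing R]

theorem upper_mul_step_eq_step_mul_diag (c d u g h : R) :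
    !![c + d, c; 0, u] * !![g + h, 1; -h, 0] =
      !![(c + d) * g + d * h, 1; -(u * h), 0] * !![1, 0; 0, c + d] := by
  rw [mul_fin_two, mul_fin_two, fin_two_eq_iff]
  refine ⟨?_, ?_, ?_, ?_⟩ <;> ring

theorem diag_mul_step (r q t : R) :
    !![1, 0; 0, r] * !![q, 1; t, 0] = !![q, 1; r * t, 0] := by
  rw [mul_fin_two, fin_two_eq_iff]
  refine ⟨?_, ?_, ?_, ?_⟩ <;> ring

end

/-- The 2×2 matrix identity over a field `K` (with `c + d ≠ 0`) encoding how the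
linear fractional transformation `β(t) = (at+b)/(ct+d)` transforms the first partial
quotients of the continued fraction. -/
theorem statement16 (K : Type*) [Field K] (a b c d g₁ g₂ h₁ h₂ x : K) (hcd : c + d ≠ 0) :
    (!![a, b; c, d] * !![1, 1; 1, 0] * !![g₁ + h₁ * x, 1; -(h₁ * x), 0] *
        !![g₂ + h₂ * x, 1; -(g₁ * h₂ * x), 0] : Matrix (Fin 2) (Fin 2) K) =
      !![(a + b) / (c + d), 1; 1, 0] *
        !![(c + d) * g₁ + d * h₁ * x, 1; -((a * d - b * c) / (c + d) * (h₁ * x)), 0] *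
        !![g₂ + h₂ * x, 1; -((c + d) * g₁ * h₂ * x), 0] := by
  rw [show (c + d) * g₁ + d * h₁ * x = (c + d) * g₁ + d * (h₁ * x) by ring,
    show -((c + d) * g₁ * h₂ * x) = (c + d) * -(g₁ * h₂ * x) by ring,
    mul_step_one_one_eq_step_mul_upper hcd, Matrix.mul_assoc _ !![c + d, c; 0, _],
    upper_mul_step_eq_step_mul_diag, ← Matrix.mul_assoc, Matrix.mul_assoc _ !![1, 0; 0, c + d],
    diag_mul_step]
end

section
/- In ℚ[[X]], define P_n = (n+1)! and Q_n(X) = (n+1)! · ∑_{j=0}^{n} X^j/(j+1)!. Then for all n ≥ 0, (Q_n(X) − P_n) · (e^X + X − 1) ≡ (Q_n(X) + P_n) · (e^X − X − 1) (mod X^{n+2}), where e^X = ∑_{k≥0} X^k/k!. -/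
open Finset PowerSeries

/-!
Multiplying out, `(Q - P)(e^X + X - 1) - (Q + P)(e^X - X - 1) = 2 (Q X - P (e^X - 1))`, and
`Q_n X = (n+1)! ∑_{i=1}^{n+1} X^i / i!` is `P_n` times the truncation of `e^X - 1` below degree
`n + 2`, so the difference vanishes modulo `X^{n+2}`.
-/

variable {K : Type*} [Field K] [Algebra ℚ K]

lemma coeff_sum_range_mul_X_eq_coeff_exp_sub_one {n k : ℕ} (hk : k ≤ n + 1) :
    coeff k ((∑ j ∈ range (n + 1), C (1 / ((j + 1).factorial : K)) * X ^ j) * X) =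
      coeff k (exp K - 1) := by
  cases k with
  | zero => simp [coeff_zero_eq_constantCoeff]
  | succ k =>
    have hkn : k ∈ range (n + 1) := mem_range.mpr (by omega)
    simp [coeff_succ_mul_X, map_sum, coeff_C_mul, coeff_X_pow, hkn]

/-- In `ℚ⟦X⟧`, with `P n = (n+1)!` and `Q n = (n+1)! · ∑_{j=0}^n X^j/(j+1)!`,
for all `n ≥ 0` we have
`(Q n - P n) · (e^X + X - 1) ≡ (Q n + P n) · (e^X - X - 1) (mod X^{n+2})`. -/
theorem statement17 (P Q : ℕ → PowerSeries ℚ)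
    (hP : ∀ n, P n = PowerSeries.C (R := ℚ) (((n + 1).factorial : ℚ)))
    (hQ : ∀ n, Q n = PowerSeries.C (R := ℚ) (((n + 1).factorial : ℚ)) *
      ∑ j ∈ Finset.range (n + 1),
        PowerSeries.C (R := ℚ) (1 / ((j + 1).factorial : ℚ)) * PowerSeries.X ^ j) :
    ∀ n : ℕ, ∀ k ≤ n + 1,
      PowerSeries.coeff (R := ℚ) k ((Q n - P n) * (PowerSeries.exp ℚ + PowerSeries.X - 1)) =
        PowerSeries.coeff (R := ℚ) k ((Q n + P n) * (PowerSeries.exp ℚ - PowerSeries.X - 1)) := by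
  intro n k hk
  have hQX : coeff k (Q n * X) = coeff k (P n * (exp ℚ - 1)) := by
    rw [hP, hQ, mul_assoc, coeff_C_mul, coeff_C_mul,
      coeff_sum_range_mul_X_eq_coeff_exp_sub_one hk]
  have hcross : (Q n - P n) * (exp ℚ + X - 1) - (Q n + P n) * (exp ℚ - X - 1) =
      2 * (Q n * X - P n * (exp ℚ - 1)) := by
    ring
  rw [← sub_eq_zero, ← map_sub, hcross, two_mul, map_add, map_sub, hQX,
    sub_self, add_zero]
end

section
/- Fix an integer N ≥ 1. In ℚ[[X]] let f_N = (∑_{n=0}^{∞} (−1)^n (N/(N+n)) X^n)^{-1} (the generating function ∑_{n≥0} c_{N,n} X^n/n! of the hypergeometric Cauchy numbers). Define sequences of polynomials p_n, q_n by p_{-1} = 1, q_{-1} = 0, p_0 = q_0 = 1, and for n ≥ 1: p_n(X) = (N+n) p_{n-1}(X) + b_n X p_{n-2}(X) and q_n(X) = (N+n) q_{n-1}(X) + b_n X q_{n-2}(X), where b_1 = N and, for k ≥ 1, b_{2k} = k^2 and b_{2k+1} = (N+k)^2. Then for all n ≥ 0, q_n(X) · f_N ≡ p_n(X) (mod X^{n+1}).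 -/
/-!
Let `g = ∑ (-1)ⁿ N / (N + n) Xⁿ = ₂F₁(N, 1; N + 1; -X)`, so that `f = g⁻¹`. The remainders
`R j = p j * g - q j` satisfy the same three-term recurrence as `p` and `q`, with `R 0 = g` and
`R 1 = g - 1`. By induction, `R j = κⱼ Xʲ ₂F₁(uⱼ, vⱼ; uⱼ + vⱼ; -X)` for some constants `κⱼ`, where
`(u₀, v₀) = (N, 1)` and `(uⱼ₊₁, vⱼ₊₁) = (vⱼ, uⱼ + 1)`. Since `b (j + 2) = vⱼ²`, the induction step
is the contiguous relation (with `s = u + v`)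
`₂F₁(u + 1, v; s + 1; -X) - ₂F₁(u, v; s; -X) = -v² / (s (s + 1)) · X · ₂F₁(u + 1, v + 1; s + 2; -X)`
together with the symmetry of `₂F₁` in its first two parameters; `R 1` is the same relation at
`(u, v) = (0, N)`. Hence `Xʲ ∣ p j * g - q j`, which is the claim.
-/

open PowerSeries

theorem ascPochhammer_succ_eval_left {S : Type*} [CommSemiring S] (n : ℕ) (x : S) :
    (ascPochhammer S (n + 1)).eval x = x * (ascPochhammer S n).eval (x + 1) := by
  rw [ascPochhammer_succ_left, Polynomial.eval_mul, Polynomial.eval_X, Polynomial.eval_comp]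
  simp

section Field

variable {K : Type*} [Field K]

/-- `₂F₁(a, b; a + b; -X)`. -/
noncomputable def zeroBalancedHypergeometric (a b : K) : K⟦X⟧ :=
  mk fun m => (-1) ^ m * ordinaryHypergeometricCoefficient a b (a + b) m

@[simp]
theorem constantCoeff_zeroBalancedHypergeometric (a b : K) :
    constantCoeff (zeroBalancedHypergeometric a b) = 1 := by
  simp [zeroBalancedHypergeometric, ordinaryHypergeometricCoefficient]

theorem zeroBalancedHypergeometric_comm (a b : K) :
    zeroBalancedHypergeometric a b = zeroBalancedHypergeometric b a := by
  ext m
  simp only [zeroBalancedHypergeometric, coeff_mk, ordinaryHypergeometricCoefficient, add_comm b]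
  ring

theorem zeroBalancedHypergeometric_zero_left (b : K) : zeroBalancedHypergeometric 0 b = 1 := by
  ext (_ | m) <;> simp [zeroBalancedHypergeometric, coeff_one]

def remainderParams (N : K) : ℕ → K × K
  | 0 => (N, 1)
  | j + 1 => ((remainderParams N j).2, (remainderParams N j).1 + 1)

theorem remainderParams_fst_add_snd (N : K) (j : ℕ) :
    (remainderParams N j).1 + (remainderParams N j).2 = N + j + 1 := by
  induction j with
  | zero => simp [remainderParams]
  | succ j ih => simp only [remainderParams]; push_cast; linear_combination ih

theorem remainderParams_two_mul (N : K) (k : ℕ) :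
    remainderParams N (2 * k) = (N + k, (k : K) + 1) := by
  induction k with
  | zero => simp [remainderParams]
  | succ k ih =>
    rw [show 2 * (k + 1) = 2 * k + 1 + 1 by ring]
    simp only [remainderParams, ih]
    push_cast
    ring_nf

theorem remainderParams_two_mul_add_one (N : K) (k : ℕ) :
    remainderParams N (2 * k + 1) = ((k : K) + 1, N + k + 1) := by
  simp only [remainderParams, remainderParams_two_mul]

theorem eq_remainderParams_fst_sq {N : K} {b : ℕ → K}
    (hbeven : ∀ k : ℕ, 1 ≤ k → b (2 * k) = (k : K) ^ 2)
    (hbodd : ∀ k : ℕ, 1 ≤ k → b (2 * k + 1) = (N + k) ^ 2) (j : ℕ) :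
    b (j + 2) = (remainderParams N (j + 1)).1 ^ 2 := by
  obtain ⟨k, rfl | rfl⟩ := Nat.even_or_odd' j
  · rw [show 2 * k + 2 = 2 * (k + 1) by ring, hbeven (k + 1) (by omega),
      remainderParams_two_mul_add_one]
    push_cast
    rfl
  · rw [show 2 * k + 1 + 2 = 2 * (k + 1) + 1 by ring, hbodd (k + 1) (by omega),
      show 2 * k + 1 + 1 = 2 * (k + 1) by ring, remainderParams_two_mul]

end Field

section OrderedField

variable {K : Type*} [Field K] [LinearOrder K] [IsStrictOrderedRing K]

theorem ordinaryHypergeometricCoefficient_contiguous {a b : K} (ha : 0 ≤ a) (hb : 0 < b) (m : ℕ) :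
    ordinaryHypergeometricCoefficient (a + 1) b (a + 1 + b) (m + 1)
      - ordinaryHypergeometricCoefficient a b (a + b) (m + 1)
      = b ^ 2 / ((a + b) * (a + b + 1))
        * ordinaryHypergeometricCoefficient (a + 1) (b + 1) (a + 1 + (b + 1)) m := by
  have hP : ∀ x : K, 0 < x → (ascPochhammer K m).eval x ≠ 0 :=
    fun x hx => (ascPochhammer_pos m x hx).ne'
  have h1 := hP (a + b + 1) (by positivity)
  have h2 := hP (a + b + 1 + 1) (by positivity)
  have hshift : (ascPochhammer K m).eval (a + b + 1) * (a + b + 1 + m)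
      = (a + b + 1) * (ascPochhammer K m).eval (a + b + 1 + 1) := by
    rw [← ascPochhammer_succ_eval, ascPochhammer_succ_eval_left]
  rw [show a + 1 + b = a + b + 1 by ring, show a + 1 + (b + 1) = a + b + 1 + 1 by ring]
  simp only [ordinaryHypergeometricCoefficient]
  rw [ascPochhammer_succ_eval _ (a + 1), ascPochhammer_succ_eval _ (a + b + 1),
    ascPochhammer_succ_eval_left _ a, ascPochhammer_succ_eval_left _ b,
    ascPochhammer_succ_eval_left _ (a + b), Nat.factorial_succ]
  have hab : 0 < a + b := by positivity
  field_simp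
  push_cast
  linear_combination -((m + 1) * m.factorial * b * (ascPochhammer K m).eval (a + 1)
    * (ascPochhammer K m).eval (b + 1)) * hshift

theorem zeroBalancedHypergeometric_succ_sub {a b : K} (ha : 0 ≤ a) (hb : 0 < b) :
    zeroBalancedHypergeometric (a + 1) b - zeroBalancedHypergeometric a b
      = -C (b ^ 2 / ((a + b) * (a + b + 1))) * X * zeroBalancedHypergeometric (a + 1) (b + 1) := by
  ext (_ | m)
  · simp [zeroBalancedHypergeometric, ordinaryHypergeometricCoefficient]
  · simp only [zeroBalancedHypergeometric, map_sub, coeff_mk, mul_assoc, neg_mul, map_neg,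
      coeff_C_mul, coeff_succ_X_mul, pow_succ]
    linear_combination (-(-1) ^ m) * ordinaryHypergeometricCoefficient_contiguous ha hb m

theorem zeroBalancedHypergeometric_one_right {a : K} (ha : 0 < a) :
    zeroBalancedHypergeometric a 1 = mk fun m => (-1) ^ m * (a / (a + m)) := by
  ext m
  have hshift : (ascPochhammer K m).eval a * (a + m) = a * (ascPochhammer K m).eval (a + 1) := by
    rw [← ascPochhammer_succ_eval, ascPochhammer_succ_eval_left]
  have h1 := (ascPochhammer_pos m (a + 1) (by positivity)).ne'
  have h2 : (m.factorial : K) ≠ 0 := by positivity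
  simp only [zeroBalancedHypergeometric, coeff_mk, ordinaryHypergeometricCoefficient,
    ascPochhammer_eval_one, add_comm a 1]
  rw [add_comm 1 a]
  field_simp
  linear_combination hshift

theorem remainderParams_pos {N : K} (hN : 0 < N) (j : ℕ) :
    0 < (remainderParams N j).1 ∧ 0 < (remainderParams N j).2 := by
  induction j with
  | zero => exact ⟨hN, one_pos⟩
  | succ j ih => exact ⟨ih.2, by simp only [remainderParams]; linarith [ih.1]⟩

theorem eq_C_mul_X_pow_mul_zeroBalancedHypergeometric {N : K} (hN : 0 < N) {b : ℕ → K}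
    (hb1 : b 1 = N) (hb : ∀ j, b (j + 2) = (remainderParams N (j + 1)).1 ^ 2) {R : ℕ → K⟦X⟧}
    (hR0 : R 0 = zeroBalancedHypergeometric N 1) (hR1 : R 1 = zeroBalancedHypergeometric N 1 - 1)
    (hR : ∀ j, R (j + 2) = C (N + j + 1) * R (j + 1) + C (b (j + 1)) * X * R j) (j : ℕ) :
    ∃ κ : K,
      R j = C κ * X ^ j
          * zeroBalancedHypergeometric (remainderParams N j).1 (remainderParams N j).2 ∧
      R (j + 1) = C (-(b (j + 1) * κ) / (N + j + 1)) * X ^ (j + 1)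
          * zeroBalancedHypergeometric (remainderParams N (j + 1)).1
              (remainderParams N (j + 1)).2 := by
  induction j with
  | zero =>
    refine ⟨1, by simp [hR0, remainderParams], ?_⟩
    have h := zeroBalancedHypergeometric_succ_sub le_rfl hN
    rw [zero_add, zero_add, zeroBalancedHypergeometric_zero_left,
      ← zeroBalancedHypergeometric_comm] at h
    rw [hR1, h, hb1]
    simp only [remainderParams, zero_add, pow_one, Nat.cast_zero, add_zero, mul_one, ← map_neg]
    congr 3
    field_simp
  | succ j ih =>
    obtain ⟨κ, hj, hj1⟩ := ih
    refine ⟨_, hj1, ?_⟩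
    obtain ⟨hu, hv⟩ := remainderParams_pos hN j
    have hs := remainderParams_fst_add_snd N j
    set u := (remainderParams N j).1
    set v := (remainderParams N j).2
    have hcont := eq_add_of_sub_eq (zeroBalancedHypergeometric_succ_sub hu.le hv)
    have hθ1 : remainderParams N (j + 1) = (v, u + 1) := rfl
    have hθ2 : remainderParams N (j + 1 + 1) = (u + 1, v + 1) := rfl
    rw [hR, hj, hj1, hb, hθ1, hθ2, zeroBalancedHypergeometric_comm v, hcont]
    have hs' : N + ((j + 1 : ℕ) : K) + 1 = u + v + 1 := by rw [hs]; push_cast; ring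
    rw [hs', ← hs]
    have hs0 : u + v ≠ 0 := by positivity
    have hs1 : u + v + 1 ≠ 0 := by positivity
    have e1 : C (u + v) * C (-(b (j + 1) * κ) / (u + v)) = -(C (b (j + 1)) * C κ) := by
      simp only [← map_mul, ← map_neg]; congr 1; field_simp
    have e2 : C (u + v) * C (-(b (j + 1) * κ) / (u + v)) * C (v ^ 2 / ((u + v) * (u + v + 1)))
        = -C (-(v ^ 2 * (-(b (j + 1) * κ) / (u + v))) / (u + v + 1)) := by
      simp only [← map_mul, ← map_neg]; congr 1; field_simp
    linear_combination (X ^ (j + 1) * zeroBalancedHypergeometric u v) * e1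
      - (X ^ (j + 2) * zeroBalancedHypergeometric (u + 1) (v + 1)) * e2

end OrderedField

theorem PowerSeries.coeff_mul_eq_of_X_pow_dvd {R : Type*} [CommRing R] {f g p q : R⟦X⟧}
    (hgf : g * f = 1) {n : ℕ} (hdvd : X ^ (n + 1) ∣ p * g - q) {k : ℕ} (hk : k ≤ n) :
    coeff k (q * f) = coeff k p := by
  have hrem : coeff k ((p * g - q) * f) = 0 :=
    X_pow_dvd_iff.mp (dvd_mul_of_dvd_left hdvd f) k (by omega)
  have hqf : q * f = p - (p * g - q) * f := by linear_combination p * hgf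
  rw [hqf, map_sub, hrem, sub_zero]

/-- Convergents of the more complicated continued fraction expansion of the
generating function `f_N = (∑_n (-1)^n (N/(N+n)) X^n)⁻¹` of the hypergeometric Cauchy
numbers.  The sequences `p, q` are indexed so that `p m`, `q m` denote `p_{m-1}`, `q_{m-1}`:
`p 0 = p_{-1} = 1`, `q 0 = q_{-1} = 0`, `p 1 = p_0 = 1`, `q 1 = q_0 = 1`, and for `n ≥ 1`
(written at shifted index `n+2`): `p_n = (N+n) p_{n-1} + b_n X p_{n-2}`, with `b_1 = N`,
`b_{2k} = k²`, `b_{2k+1} = (N+k)²` for `k ≥ 1`.  Then `q_n · f_N ≡ p_n (mod X^{n+1})`. -/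
theorem statement19 (N : ℕ) (hN : 1 ≤ N)
    (f : PowerSeries ℚ)
    (hf : f = (PowerSeries.mk fun n => (-1) ^ n * ((N : ℚ) / ((N : ℚ) + n)))⁻¹)
    (b : ℕ → ℚ)
    (hb1 : b 1 = N)
    (hbeven : ∀ k : ℕ, 1 ≤ k → b (2 * k) = (k : ℚ) ^ 2)
    (hbodd : ∀ k : ℕ, 1 ≤ k → b (2 * k + 1) = ((N : ℚ) + k) ^ 2)
    (p q : ℕ → PowerSeries ℚ)
    (hp0 : p 0 = 1) (hq0 : q 0 = 0) (hp1 : p 1 = 1) (hq1 : q 1 = 1)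
    (hp : ∀ n : ℕ, p (n + 2) = PowerSeries.C ((N : ℚ) + n + 1) * p (n + 1)
      + PowerSeries.C (b (n + 1)) * PowerSeries.X * p n)
    (hq : ∀ n : ℕ, q (n + 2) = PowerSeries.C ((N : ℚ) + n + 1) * q (n + 1)
      + PowerSeries.C (b (n + 1)) * PowerSeries.X * q n) :
    ∀ n : ℕ, ∀ k ≤ n,
      PowerSeries.coeff k (q (n + 1) * f) = PowerSeries.coeff k (p (n + 1)) := by
  intro n k hk
  have hN' : (0 : ℚ) < N := by exact_mod_cast hN
  have hgf : zeroBalancedHypergeometric (N : ℚ) 1 * f = 1 := by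
    rw [hf, ← zeroBalancedHypergeometric_one_right hN']
    exact PowerSeries.mul_inv_cancel _ (by simp)
  obtain ⟨κ, hrem, -⟩ := eq_C_mul_X_pow_mul_zeroBalancedHypergeometric hN' hb1
    (eq_remainderParams_fst_sq hbeven hbodd)
    (R := fun j => p j * zeroBalancedHypergeometric (N : ℚ) 1 - q j)
    (by simp [hp0, hq0]) (by simp [hp1, hq1]) (fun j => by simp only [hp, hq]; ring) (n + 1)
  refine coeff_mul_eq_of_X_pow_dvd hgf ?_ hk
  rw [hrem]
  exact dvd_mul_of_dvd_left (dvd_mul_left _ _) _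
end
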